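/- arXiv:1604.07029 — 3 statements merged into one kernel-verified Lean document; each statement's English description precedes it below -/
import Mathlib

section
/- Let A ∈ (C^{n,α})^{m×m} and suppose a differentiable function y : [a,b] → ℂ^m satisfies the system y'(t) + A(t)y(t) = f(t) on [a,b] for some right-hand side f ∈ (C^{n,α})^m. Then y ∈ (C^{n+1,α})^m. Moreover, as f runs through the whole space (C^{n,α})^m, the solutions y to this system run through the whole space (C^{n+1,α})^m. -/
/-
Regularity is a bootstrap. A differentiable solution has the continuous derivative
`f - A y`, so it is `C¹` and hence in `C^{0,α}`. Since `C^{k,α}` is closed under sums and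
products, `y ∈ C^{k,α}` with `k ≤ n` gives `y' = f - A y ∈ C^{k,α}`, i.e. `y ∈ C^{k+1,α}`.
The same closure properties show that `y ↦ y' + A y` maps `C^{n+1,α}` into `C^{n,α}`.
For existence, the field `x ↦ f t - A t x` is Lipschitz with a constant independent of `t`, so
Picard–Lindelöf gives solutions on all subintervals shorter than a fixed length, from any initial
value, and these glue to a solution on `[a, b]`.
-/

open Set Filter Topology

noncomputable def supIcc (a b : ℝ) (g : ℝ → ℂ) : ℝ :=
  sSup ((fun t => ‖g t‖) '' Set.Icc a b)

noncomputable def cNorm (a b : ℝ) (l : ℕ) (x : ℝ → ℂ) : ℝ :=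
  ∑ j ∈ Finset.range (l + 1), supIcc a b (iteratedDerivWithin j x (Set.Icc a b))

noncomputable def holderSemi (a b α : ℝ) (g : ℝ → ℂ) : ℝ :=
  sSup {r : ℝ | ∃ s ∈ Set.Icc a b, ∃ t ∈ Set.Icc a b, s ≠ t ∧ r = ‖g s - g t‖ / |s - t| ^ α}

noncomputable def holderNorm (a b : ℝ) (l : ℕ) (α : ℝ) (x : ℝ → ℂ) : ℝ :=
  cNorm a b l x +
    (if α = 0 then 0 else holderSemi a b α (iteratedDerivWithin l x (Set.Icc a b)))

def InHolder (a b : ℝ) (l : ℕ) (α : ℝ) (x : ℝ → ℂ) : Prop :=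
  ContDiffOn ℝ l x (Set.Icc a b) ∧
    (α = 0 ∨ ∃ K : ℝ, ∀ s ∈ Set.Icc a b, ∀ t ∈ Set.Icc a b,
      ‖iteratedDerivWithin l x (Set.Icc a b) s - iteratedDerivWithin l x (Set.Icc a b) t‖
        ≤ K * |s - t| ^ α)

def InHolderV (a b : ℝ) (l : ℕ) (α : ℝ) {m : ℕ} (y : ℝ → Fin m → ℂ) : Prop :=
  ∀ i, InHolder a b l α fun t => y t i

noncomputable def holderNormV (a b : ℝ) (l : ℕ) (α : ℝ) {m : ℕ} (y : ℝ → Fin m → ℂ) : ℝ :=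
  ∑ i, holderNorm a b l α fun t => y t i

def InHolderM (a b : ℝ) (l : ℕ) (α : ℝ) {m : ℕ} (A : ℝ → Matrix (Fin m) (Fin m) ℂ) : Prop :=
  ∀ i j, InHolder a b l α fun t => A t i j

noncomputable def holderNormM (a b : ℝ) (l : ℕ) (α : ℝ) {m : ℕ}
    (A : ℝ → Matrix (Fin m) (Fin m) ℂ) : ℝ :=
  ∑ i, ∑ j, holderNorm a b l α fun t => A t i j

noncomputable def Lop (a b : ℝ) {m : ℕ} (A : ℝ → Matrix (Fin m) (Fin m) ℂ)
    (y : ℝ → Fin m → ℂ) : ℝ → Fin m → ℂ :=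
  fun t i => derivWithin (fun s => y s i) (Set.Icc a b) t + (A t).mulVec (y t) i

def SolvesV (a b : ℝ) {m : ℕ} (A : ℝ → Matrix (Fin m) (Fin m) ℂ)
    (y f : ℝ → Fin m → ℂ) : Prop :=
  ∀ t ∈ Set.Icc a b, ∀ i, Lop a b A y t i = f t i

def IsHolderOn {E : Type*} [SeminormedAddCommGroup E] (α : ℝ) (g : ℝ → E) (s : Set ℝ) : Prop :=
  ∃ K : ℝ, ∀ x ∈ s, ∀ y ∈ s, ‖g x - g y‖ ≤ K * |x - y| ^ α

namespace IsHolderOn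

variable {α : ℝ} {s : Set ℝ}

lemma add {E : Type*} [SeminormedAddCommGroup E] {g h : ℝ → E}
    (hg : IsHolderOn α g s) (hh : IsHolderOn α h s) : IsHolderOn α (fun t => g t + h t) s := by
  obtain ⟨K₁, h₁⟩ := hg
  obtain ⟨K₂, h₂⟩ := hh
  refine ⟨K₁ + K₂, fun x hx y hy => ?_⟩
  calc ‖g x + h x - (g y + h y)‖ = ‖(g x - g y) + (h x - h y)‖ := by abel_nf
    _ ≤ ‖g x - g y‖ + ‖h x - h y‖ := norm_add_le _ _
    _ ≤ (K₁ + K₂) * |x - y| ^ α := by linarith [h₁ x hx y hy, h₂ x hx y hy]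

lemma sub {E : Type*} [SeminormedAddCommGroup E] {g h : ℝ → E}
    (hg : IsHolderOn α g s) (hh : IsHolderOn α h s) : IsHolderOn α (fun t => g t - h t) s := by
  obtain ⟨K₁, h₁⟩ := hg
  obtain ⟨K₂, h₂⟩ := hh
  refine ⟨K₁ + K₂, fun x hx y hy => ?_⟩
  calc ‖g x - h x - (g y - h y)‖ = ‖(g x - g y) - (h x - h y)‖ := by abel_nf
    _ ≤ ‖g x - g y‖ + ‖h x - h y‖ := norm_sub_le _ _
    _ ≤ (K₁ + K₂) * |x - y| ^ α := by linarith [h₁ x hx y hy, h₂ x hx y hy]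

lemma mul {R : Type*} [NormedRing R] {g h : ℝ → R} (hs : IsCompact s)
    (hgc : ContinuousOn g s) (hhc : ContinuousOn h s)
    (hg : IsHolderOn α g s) (hh : IsHolderOn α h s) : IsHolderOn α (fun t => g t * h t) s := by
  obtain ⟨K₁, h₁⟩ := hg
  obtain ⟨K₂, h₂⟩ := hh
  obtain ⟨M₁, hM₁⟩ := hs.exists_bound_of_continuousOn hgc
  obtain ⟨M₂, hM₂⟩ := hs.exists_bound_of_continuousOn hhc
  refine ⟨M₁ * K₂ + K₁ * M₂, fun x hx y hy => ?_⟩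
  have hK₁ : 0 ≤ K₁ * |x - y| ^ α := (norm_nonneg _).trans (h₁ x hx y hy)
  calc ‖g x * h x - g y * h y‖ = ‖g x * (h x - h y) + (g x - g y) * h y‖ := by noncomm_ring
    _ ≤ ‖g x‖ * ‖h x - h y‖ + ‖g x - g y‖ * ‖h y‖ :=
        (norm_add_le _ _).trans (add_le_add (norm_mul_le _ _) (norm_mul_le _ _))
    _ ≤ M₁ * (K₂ * |x - y| ^ α) + K₁ * |x - y| ^ α * M₂ := by
        gcongr
        · exact (norm_nonneg _).trans (hM₁ x hx)
        exacts [hM₁ x hx, h₂ x hx y hy, h₁ x hx y hy, hM₂ y hy]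
    _ = (M₁ * K₂ + K₁ * M₂) * |x - y| ^ α := by ring

end IsHolderOn

lemma isHolderOn_Icc_of_differentiableOn {E : Type*} [NormedAddCommGroup E] [NormedSpace ℝ E]
    {a b α : ℝ} (hα1 : α ≤ 1) {g : ℝ → E}
    (hg : DifferentiableOn ℝ g (Icc a b))
    (hg' : ContinuousOn (derivWithin g (Icc a b)) (Icc a b)) : IsHolderOn α g (Icc a b) := by
  obtain ⟨L, hL⟩ := isCompact_Icc.exists_bound_of_continuousOn hg'
  refine ⟨L * (b - a) ^ (1 - α), fun x hx y hy => ?_⟩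
  have hxy : |x - y| ≤ b - a := Real.dist_le_of_mem_Icc hx hy
  have hL0 : 0 ≤ L := (norm_nonneg _).trans (hL x hx)
  calc ‖g x - g y‖ ≤ L * ‖x - y‖ :=
        (convex_Icc a b).norm_image_sub_le_of_norm_derivWithin_le hg hL hy hx
    _ = L * (|x - y| ^ (1 - α) * |x - y| ^ α) := by
        rw [← Real.rpow_add' (abs_nonneg _) (by simp), sub_add_cancel, Real.rpow_one,
          Real.norm_eq_abs]
    _ ≤ L * ((b - a) ^ (1 - α) * |x - y| ^ α) := by
        gcongr
    _ = L * (b - a) ^ (1 - α) * |x - y| ^ α := by ring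

namespace InHolder

variable {a b α : ℝ} {k l : ℕ} {x y : ℝ → ℂ}

lemma of_contDiffOn_succ (hab : a < b) (hα1 : α ≤ 1)
    (h : ContDiffOn ℝ (l + 1) x (Icc a b)) : InHolder a b l α x := by
  have hu := uniqueDiffOn_Icc hab
  refine ⟨h.of_le (by norm_cast; omega), Or.inr (isHolderOn_Icc_of_differentiableOn hα1
    (h.differentiableOn_iteratedDerivWithin (by norm_cast; omega) hu) ?_)⟩
  rw [← iteratedDerivWithin_succ]
  exact h.continuousOn_iteratedDerivWithin le_rfl hu

lemma _root_.inHolder_succ_iff (hab : a < b) :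
    InHolder a b (l + 1) α x ↔
      DifferentiableOn ℝ x (Icc a b) ∧ InHolder a b l α (derivWithin x (Icc a b)) := by
  simp only [InHolder, Nat.cast_add, Nat.cast_one, contDiffOn_succ_iff_derivWithin
    (uniqueDiffOn_Icc hab), iteratedDerivWithin_succ', WithTop.natCast_ne_top, false_implies, true_and, and_assoc]

lemma holder (h : InHolder a b l α x) :
    α = 0 ∨ IsHolderOn α (iteratedDerivWithin l x (Icc a b)) (Icc a b) :=
  h.2

lemma of_succ (hab : a < b) (hα1 : α ≤ 1) (h : InHolder a b (l + 1) α x) :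
    InHolder a b l α x :=
  of_contDiffOn_succ hab hα1 h.1

lemma of_le (hab : a < b) (hα1 : α ≤ 1) (h : InHolder a b l α x) (hkl : k ≤ l) :
    InHolder a b k α x := by
  induction hkl with
  | refl => exact h
  | step _ ih => exact ih (h.of_succ hab hα1)

lemma congr (h : InHolder a b l α x) (hxy : EqOn x y (Icc a b)) : InHolder a b l α y := by
  refine ⟨h.1.congr fun t ht => (hxy ht).symm, h.2.imp id fun ⟨K, hK⟩ => ⟨K, fun s hs t ht => ?_⟩⟩
  rw [← iteratedDerivWithin_congr hxy hs, ← iteratedDerivWithin_congr hxy ht]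
  exact hK s hs t ht

lemma add (hab : a < b) (hx : InHolder a b l α x) (hy : InHolder a b l α y) :
    InHolder a b l α (fun t => x t + y t) := by
  refine ⟨hx.1.add hy.1, hx.holder.elim Or.inl fun hx' => hy.holder.imp id fun hy' => ?_⟩
  obtain ⟨K, hK⟩ := hx'.add hy'
  have e : ∀ t ∈ Icc a b, iteratedDerivWithin l (fun t => x t + y t) (Icc a b) t =
      iteratedDerivWithin l x (Icc a b) t + iteratedDerivWithin l y (Icc a b) t :=
    fun t ht => iteratedDerivWithin_add ht (uniqueDiffOn_Icc hab) (hx.1 t ht) (hy.1 t ht)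
  refine ⟨K, fun s hs t ht => ?_⟩
  rw [e s hs, e t ht]
  exact hK s hs t ht

lemma sub (hab : a < b) (hx : InHolder a b l α x) (hy : InHolder a b l α y) :
    InHolder a b l α (fun t => x t - y t) := by
  refine ⟨hx.1.sub hy.1, hx.holder.elim Or.inl fun hx' => hy.holder.imp id fun hy' => ?_⟩
  obtain ⟨K, hK⟩ := hx'.sub hy'
  have e : ∀ t ∈ Icc a b, iteratedDerivWithin l (fun t => x t - y t) (Icc a b) t =
      iteratedDerivWithin l x (Icc a b) t - iteratedDerivWithin l y (Icc a b) t :=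
    fun t ht => iteratedDerivWithin_sub ht (uniqueDiffOn_Icc hab) (hx.1 t ht) (hy.1 t ht)
  refine ⟨K, fun s hs t ht => ?_⟩
  rw [e s hs, e t ht]
  exact hK s hs t ht

lemma mul (hab : a < b) (hα1 : α ≤ 1) (hx : InHolder a b l α x)
    (hy : InHolder a b l α y) : InHolder a b l α (fun t => x t * y t) := by
  induction l generalizing x y with
  | zero =>
    refine ⟨hx.1.mul hy.1, hx.holder.elim Or.inl fun hx' => hy.holder.imp id fun hy' => ?_⟩
    simp only [iteratedDerivWithin_zero] at hx' hy' ⊢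
    exact hx'.mul isCompact_Icc hx.1.continuousOn hy.1.continuousOn hy'
  | succ l ih =>
    obtain ⟨hxd, hx'⟩ := (inHolder_succ_iff hab).1 hx
    obtain ⟨hyd, hy'⟩ := (inHolder_succ_iff hab).1 hy
    refine (inHolder_succ_iff hab).2 ⟨hxd.mul hyd, ?_⟩
    refine ((ih hx' (hy.of_succ hab hα1)).add hab (ih (hx.of_succ hab hα1) hy')).congr
      fun t ht => ?_
    exact (derivWithin_mul (hxd t ht) (hyd t ht)).symm

lemma sum (hab : a < b) (hα1 : α ≤ 1) {ι : Type*} (s : Finset ι)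
    {F : ι → ℝ → ℂ} (h : ∀ i ∈ s, InHolder a b l α (F i)) :
    InHolder a b l α (fun t => ∑ i ∈ s, F i t) := by
  classical
  induction s using Finset.induction_on with
  | empty => simpa using of_contDiffOn_succ hab hα1 (l := l) (contDiffOn_const (c := (0 : ℂ)))
  | insert i s hi ih =>
    simp only [Finset.sum_insert hi]
    exact (h i (s.mem_insert_self i)).add hab (ih fun j hj => h j (Finset.mem_insert_of_mem hj))

end InHolder

lemma inHolder_zero_iff {a b : ℝ} {l : ℕ} {x : ℝ → ℂ} :
    InHolder a b l 0 x ↔ ContDiffOn ℝ l x (Icc a b) := by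
  simp [InHolder]

open scoped Matrix

section Systems

variable {a b α : ℝ} {l m : ℕ} {A : ℝ → Matrix (Fin m) (Fin m) ℂ} {f y z : ℝ → Fin m → ℂ}

lemma InHolderV.congr (hy : InHolderV a b l α y) (hyz : EqOn y z (Icc a b)) :
    InHolderV a b l α z :=
  fun i => (hy i).congr fun _ ht => congrFun (hyz ht) i

lemma inHolderV_succ_iff (hab : a < b) :
    InHolderV a b (l + 1) α y ↔ (∀ i, DifferentiableOn ℝ (fun t => y t i) (Icc a b)) ∧
      InHolderV a b l α (fun t i => derivWithin (fun s => y s i) (Icc a b) t) := by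
  simp only [InHolderV, inHolder_succ_iff hab, forall_and]

lemma InHolderV.add (hab : a < b) (hy : InHolderV a b l α y) (hz : InHolderV a b l α z) :
    InHolderV a b l α (fun t => y t + z t) :=
  fun i => (hy i).add hab (hz i)

lemma InHolderV.sub (hab : a < b) (hy : InHolderV a b l α y) (hz : InHolderV a b l α z) :
    InHolderV a b l α (fun t => y t - z t) :=
  fun i => (hy i).sub hab (hz i)

lemma InHolderM.mulVec (hab : a < b) (hα1 : α ≤ 1) (hA : InHolderM a b l α A)
    (hy : InHolderV a b l α y) : InHolderV a b l α (fun t => A t *ᵥ y t) :=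
  fun i => InHolder.sum hab hα1 Finset.univ fun j _ => (hA i j).mul hab hα1 (hy j)

lemma SolvesV.eqOn (h : SolvesV a b A y f) :
    EqOn (fun t i => derivWithin (fun s => y s i) (Icc a b) t) (fun t => f t - A t *ᵥ y t)
      (Icc a b) :=
  fun t ht => funext fun i => eq_sub_of_add_eq (h t ht i)

lemma InHolderV.succ_of_solvesV (hab : a < b) (hα1 : α ≤ 1) (hA : InHolderM a b l α A)
    (hf : InHolderV a b l α f) (hy : InHolderV a b l α y)
    (hyd : ∀ i, DifferentiableOn ℝ (fun t => y t i) (Icc a b)) (hsol : SolvesV a b A y f) :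
    InHolderV a b (l + 1) α y :=
  (inHolderV_succ_iff hab).2 ⟨hyd, (hf.sub hab (hA.mulVec hab hα1 hy)).congr hsol.eqOn.symm⟩

lemma SolvesV.inHolderV (hab : a < b) (hα1 : α ≤ 1) (hA : InHolderM a b l α A)
    (hf : InHolderV a b l α f) (hyd : ∀ i, DifferentiableOn ℝ (fun t => y t i) (Icc a b))
    (hsol : SolvesV a b A y f) : InHolderV a b (l + 1) α y := by
  have hC1 : InHolderV a b 1 0 y :=
    InHolderV.succ_of_solvesV hab zero_le_one
      (fun i j => inHolder_zero_iff.2 ((hA i j).1.of_le (by simp)))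
      (fun i => inHolder_zero_iff.2 ((hf i).1.of_le (by simp)))
      (fun i => inHolder_zero_iff.2 (contDiffOn_zero.2 (hyd i).continuousOn)) hyd hsol
  have hle : ∀ k ≤ l + 1, InHolderV a b k α y := by
    intro k hk
    induction k with
    | zero => exact fun i => InHolder.of_contDiffOn_succ hab hα1 (hC1 i).1
    | succ k ih =>
      exact InHolderV.succ_of_solvesV hab hα1 (fun i j => (hA i j).of_le hab hα1 (by omega))
        (fun i => (hf i).of_le hab hα1 (by omega)) (ih (by omega)) hyd hsol
  exact hle _ le_rfl

lemma InHolderV.lop (hab : a < b) (hα1 : α ≤ 1) (hA : InHolderM a b l α A)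
    (hy : InHolderV a b (l + 1) α y) : InHolderV a b l α (Lop a b A y) :=
  ((inHolderV_succ_iff hab).1 hy).2.add hab (hA.mulVec hab hα1 fun i => (hy i).of_succ hab hα1)

end Systems

section LinearODE

open scoped NNReal

variable {E : Type*} [NormedAddCommGroup E] [NormedSpace ℝ E] {v : ℝ → E → E}

lemma exists_eqOn_forall_mem_Icc_hasDerivWithinAt_of_adjacent {c d e : ℝ} (hcd : c ≤ d)
    (hde : d ≤ e) {u w : ℝ → E}
    (hu : ∀ t ∈ Icc c d, HasDerivWithinAt u (v t (u t)) (Icc c d) t)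
    (hw : ∀ t ∈ Icc d e, HasDerivWithinAt w (v t (w t)) (Icc d e) t) (huw : u d = w d) :
    ∃ z : ℝ → E, EqOn z u (Icc c d) ∧
      ∀ t ∈ Icc c e, HasDerivWithinAt z (v t (z t)) (Icc c e) t := by
  set z : ℝ → E := fun s => if s ≤ d then u s else w s
  have hzu : EqOn z u (Icc c d) := fun s hs => if_pos hs.2
  have hzw : EqOn z w (Icc d e) := fun s hs => by
    rcases hs.1.eq_or_lt with rfl | h
    · simp [z, huw]
    · simp [z, not_le.2 h]
  refine ⟨z, hzu, fun t _ => ?_⟩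
  rw [← Icc_union_Icc_eq_Icc hcd hde]
  -- away from a closed piece, the derivative within that piece is vacuous
  refine HasDerivWithinAt.union ?_ ?_
  · by_cases ht : t ∈ Icc c d
    · rw [hzu ht]
      exact (hu t ht).congr hzu (hzu ht)
    · exact HasFDerivWithinAt.of_notMem_closure (by rwa [closure_Icc])
  · by_cases ht : t ∈ Icc d e
    · rw [hzw ht]
      exact (hw t ht).congr hzw (hzw ht)
    · exact HasFDerivWithinAt.of_notMem_closure (by rwa [closure_Icc])

variable [CompleteSpace E]

lemma exists_eq_forall_mem_Icc_hasDerivWithinAt_of_mul_le_half {c c' : ℝ} (hcc' : c ≤ c')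
    {K : ℝ≥0} (hlip : ∀ t ∈ Icc c c', LipschitzWith K (v t))
    (hcont : ∀ x, ContinuousOn (v · x) (Icc c c')) (hlen : (c' - c) * K ≤ 1 / 2) (x₀ : E) :
    ∃ z : ℝ → E, z c = x₀ ∧ ∀ t ∈ Icc c c', HasDerivWithinAt z (v t (z t)) (Icc c c') t := by
  obtain ⟨B, hB⟩ := isCompact_Icc.exists_bound_of_continuousOn (hcont x₀)
  have hB0 : 0 ≤ B := (norm_nonneg _).trans (hB c ⟨le_rfl, hcc'⟩)
  have hδ : 0 ≤ c' - c := sub_nonneg.2 hcc'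
  -- on the ball of radius `R` the field is bounded by `B + K R`, and `(c' - c) K ≤ 1 / 2` makes
  -- `(B + K R) (c' - c) ≤ R`: solutions cannot leave the ball
  let R : ℝ≥0 := ⟨2 * B * (c' - c), by positivity⟩
  let L : ℝ≥0 := ⟨B + K * R, by positivity⟩
  have hpl : IsPicardLindelof v (tmin := c) (tmax := c') ⟨c, le_rfl, hcc'⟩ x₀ R 0 L K :=
    { lipschitzOnWith := fun t ht => (hlip t ht).lipschitzOnWith
      continuousOn := fun x _ => hcont x
      norm_le := fun t ht x hx => by
        calc ‖v t x‖ ≤ ‖v t x₀‖ + ‖v t x - v t x₀‖ := norm_le_insert' _ _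
          _ ≤ B + K * R := by
            gcongr
            · exact hB t ht
            · exact ((hlip t ht).norm_sub_le x x₀).trans (by
                gcongr; exact mem_closedBall_iff_norm.1 hx)
      mul_max_le := by
        show (B + K * (2 * B * (c' - c))) * max (c' - c) (c - c) ≤ 2 * B * (c' - c) - 0
        rw [sub_self, max_eq_left hδ, sub_zero]
        nlinarith [mul_nonneg hB0 hδ] }
  exact hpl.exists_eq_forall_mem_Icc_hasDerivWithinAt₀

theorem exists_eq_forall_mem_Icc_hasDerivWithinAt_of_lipschitzWith {a b : ℝ} (hab : a ≤ b)
    {K : ℝ≥0} (hlip : ∀ t ∈ Icc a b, LipschitzWith K (v t))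
    (hcont : ∀ x, ContinuousOn (v · x) (Icc a b)) (x₀ : E) :
    ∃ y : ℝ → E, y a = x₀ ∧ ∀ t ∈ Icc a b, HasDerivWithinAt y (v t (y t)) (Icc a b) t := by
  set δ : ℝ := 1 / (2 * (K + 1))
  have hδ0 : 0 < δ := by positivity
  have hδK : δ * K ≤ 1 / 2 := by
    show 1 / (2 * (K + 1)) * K ≤ 1 / 2
    rw [div_mul_eq_mul_div, one_mul, div_le_iff₀ (by positivity)]
    linarith
  have local_sol : ∀ c ∈ Icc a b, ∀ d ∈ Icc a b, c ≤ d → d - c ≤ δ → ∀ x : E,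
      ∃ z : ℝ → E, z c = x ∧ ∀ t ∈ Icc c d, HasDerivWithinAt z (v t (z t)) (Icc c d) t :=
    fun c hc d hd hcd hlen => exists_eq_forall_mem_Icc_hasDerivWithinAt_of_mul_le_half hcd
      (fun t ht => hlip t (Icc_subset_Icc hc.1 hd.2 ht))
      (fun x => (hcont x).mono (Icc_subset_Icc hc.1 hd.2))
      (by nlinarith [K.2])
  have hstep : ∀ k : ℕ, ∀ c ∈ Icc a b, c ≤ a + k * δ → ∃ y : ℝ → E, y a = x₀ ∧
      ∀ t ∈ Icc a c, HasDerivWithinAt y (v t (y t)) (Icc a c) t := by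
    intro k
    induction k with
    | zero =>
      intro c hc hca
      exact local_sol a ⟨le_rfl, hab⟩ c hc hc.1 (by simp at hca; linarith) x₀
    | succ k ih =>
      intro c hc hck
      set d := max a (c - δ)
      have hd : d ∈ Icc a b := ⟨le_max_left _ _, max_le hab (by linarith [hc.2])⟩
      have hdc : d ≤ c := max_le hc.1 (by linarith)
      obtain ⟨u, hua, hu⟩ := ih d hd (max_le (le_add_of_nonneg_right (by positivity)) (by push_cast at hck; linarith))
      obtain ⟨w, hwd, hw⟩ := local_sol d hd c hc hdc (by linarith [le_max_right a (c - δ)]) (u d)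
      obtain ⟨z, hzu, hz⟩ :=
        exists_eqOn_forall_mem_Icc_hasDerivWithinAt_of_adjacent hd.1 hdc hu hw hwd.symm
      exact ⟨z, (hzu ⟨le_rfl, hd.1⟩).trans hua, hz⟩
  obtain ⟨k, hk⟩ := exists_nat_ge ((b - a) / δ)
  exact hstep k b ⟨hab, le_rfl⟩ (by rw [div_le_iff₀ hδ0] at hk; linarith)

attribute [local instance] Matrix.linftyOpNormedAddCommGroup in
lemma exists_forall_mem_Icc_hasDerivWithinAt_sub_mulVec {ι : Type*} [Fintype ι] {a b : ℝ}
    (hab : a ≤ b) {A : ℝ → Matrix ι ι ℂ} {f : ℝ → ι → ℂ} (hA : ContinuousOn A (Icc a b))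
    (hf : ContinuousOn f (Icc a b)) :
    ∃ y : ℝ → ι → ℂ, ∀ t ∈ Icc a b, HasDerivWithinAt y (f t - A t *ᵥ y t) (Icc a b) t := by
  obtain ⟨K, hK⟩ := isCompact_Icc.exists_bound_of_continuousOn hA
  have hlip : ∀ t ∈ Icc a b, LipschitzWith K.toNNReal (fun x => f t - A t *ᵥ x) :=
    fun t ht => LipschitzWith.of_dist_le_mul fun x x' => by
      rw [dist_eq_norm, dist_eq_norm, sub_sub_sub_cancel_left, ← Matrix.mulVec_sub,
        norm_sub_rev x]
      calc ‖A t *ᵥ (x' - x)‖ ≤ ‖A t‖ * ‖x' - x‖ := Matrix.linfty_opNorm_mulVec _ _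
        _ ≤ K.toNNReal * ‖x' - x‖ := by
          gcongr
          exact (hK t ht).trans (Real.le_coe_toNNReal K)
  obtain ⟨y, -, hy⟩ := exists_eq_forall_mem_Icc_hasDerivWithinAt_of_lipschitzWith hab hlip
    (fun x => hf.sub ((continuous_id.matrix_mulVec continuous_const).comp_continuousOn hA)) 0
  exact ⟨y, hy⟩

end LinearODE

lemma exists_solvesV {a b : ℝ} (hab : a < b) {m : ℕ} {A : ℝ → Matrix (Fin m) (Fin m) ℂ}
    {f : ℝ → Fin m → ℂ} (hA : ContinuousOn A (Icc a b)) (hf : ContinuousOn f (Icc a b)) :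
    ∃ y : ℝ → Fin m → ℂ, (∀ i, DifferentiableOn ℝ (fun t => y t i) (Icc a b)) ∧
      SolvesV a b A y f := by
  obtain ⟨y, hy⟩ := exists_forall_mem_Icc_hasDerivWithinAt_sub_mulVec hab.le hA hf
  have hyi : ∀ t ∈ Icc a b, ∀ i, HasDerivWithinAt (fun s => y s i)
      (f t i - (A t *ᵥ y t) i) (Icc a b) t :=
    fun t ht i => hasDerivWithinAt_pi.1 (hy t ht) i
  refine ⟨y, fun i t ht => (hyi t ht i).differentiableWithinAt, fun t ht i => ?_⟩
  rw [Lop, (hyi t ht i).derivWithin (uniqueDiffOn_Icc hab t ht), sub_add_cancel]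

theorem statement0_general (a b : ℝ) (hab : a < b) (n m : ℕ)
    (α : ℝ) (hα1 : α ≤ 1)
    (A : ℝ → Matrix (Fin m) (Fin m) ℂ) (hA : InHolderM a b n α A) :
    (∀ f y : ℝ → Fin m → ℂ, InHolderV a b n α f →
      (∀ i, DifferentiableOn ℝ (fun t => y t i) (Set.Icc a b)) →
      SolvesV a b A y f → InHolderV a b (n + 1) α y) ∧
    (∀ f : ℝ → Fin m → ℂ, InHolderV a b n α f →
      ∃ y : ℝ → Fin m → ℂ, InHolderV a b (n + 1) α y ∧ SolvesV a b A y f) ∧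
    (∀ y : ℝ → Fin m → ℂ, InHolderV a b (n + 1) α y →
      ∃ f : ℝ → Fin m → ℂ, InHolderV a b n α f ∧ SolvesV a b A y f) := by
  refine ⟨fun f y hf hyd hsol => hsol.inHolderV hab hα1 hA hf hyd, fun f hf => ?_,
    fun y hy => ⟨Lop a b A y, hy.lop hab hα1 hA, fun _ _ _ => rfl⟩⟩
  obtain ⟨y, hyd, hsol⟩ := exists_solvesV hab
    (continuousOn_pi.2 fun i => continuousOn_pi.2 fun j => (hA i j).1.continuousOn)
    (continuousOn_pi.2 fun i => (hf i).1.continuousOn)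
  exact ⟨y, hsol.inHolderV hab hα1 hA hf hyd, hsol⟩

/-- Lemma 3.2: if `A ∈ (C^{n,α})^{m×m}` and a differentiable `y` solves
`y' + A y = f` on `[a,b]` with `f ∈ (C^{n,α})^m`, then `y ∈ (C^{n+1,α})^m`; moreover, as `f`
runs through `(C^{n,α})^m`, the solutions run through the whole space `(C^{n+1,α})^m`. -/
theorem statement0 (a b : ℝ) (hab : a < b) (n m : ℕ) (hm : 1 ≤ m)
    (α : ℝ) (hα0 : 0 ≤ α) (hα1 : α ≤ 1)
    (A : ℝ → Matrix (Fin m) (Fin m) ℂ) (hA : InHolderM a b n α A) :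
    (∀ f y : ℝ → Fin m → ℂ, InHolderV a b n α f →
      (∀ i, DifferentiableOn ℝ (fun t => y t i) (Set.Icc a b)) →
      SolvesV a b A y f → InHolderV a b (n + 1) α y) ∧
    (∀ f : ℝ → Fin m → ℂ, InHolderV a b n α f →
      ∃ y : ℝ → Fin m → ℂ, InHolderV a b (n + 1) α y ∧ SolvesV a b A y f) ∧
    (∀ y : ℝ → Fin m → ℂ, InHolderV a b (n + 1) α y →
      ∃ f : ℝ → Fin m → ℂ, InHolderV a b n α f ∧ SolvesV a b A y f) :=
  statement0_general a b hab n m α hα1 A hA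
end

section
/- Fix t₀ ∈ [a,b] and let A ∈ (C^{n,α})^{m×m}. Define the integral operator V_A by (V_A Y)(t) := ∫_{t₀}^{t} A(s)Y(s) ds for Y ∈ (C^{n+1,α})^{m×m} and t ∈ [a,b]. Then V_A is a compact linear operator on (C^{n+1,α})^{m×m}, and there is a positive constant κ, independent of A, such that its operator norm satisfies ‖V_A‖ ≤ κ ‖A‖_{n,α}. -/
/-!
Entrywise, `V_A Y` is the primitive of `h = A Y`. Integration gains one derivative, so
`‖V_A Y‖_{n+1,α} ≤ (1 + (b - a)) ‖h‖_{n,α}`, and by Leibniz' rule `‖h‖_{n,α}` is bounded by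
`‖A‖_{n,α}` times a norm of `Y` of lower order: the `C^n`-norm if `α = 0`, the `C^{n+1}`-norm
if `α > 0` (derivatives of order `≤ n` of a `C^{n+1}` function are Lipschitz, hence `α`-Hölder
on a bounded interval). By Arzelà–Ascoli the unit ball of `C^{n+1,α}` is relatively compact for
that lower-order norm, which makes `V_A` compact.
-/

open Set Filter Topology

/-- The integral operator `V_A`: `(V_A Y)(t) = ∫_{t₀}^t A(s)Y(s) ds` (entrywise integrals). -/
noncomputable def Vop (t₀ : ℝ) {m : ℕ} (A Y : ℝ → Matrix (Fin m) (Fin m) ℂ) :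
    ℝ → Matrix (Fin m) (Fin m) ℂ :=
  fun t => Matrix.of fun i j => ∫ s in t₀..t, (A s * Y s) i j

section Seminorms

variable {a b α : ℝ} {g g' : ℝ → ℂ}

lemma supIcc_nonneg (a b : ℝ) (g : ℝ → ℂ) : 0 ≤ supIcc a b g :=
  Real.sSup_nonneg <| by rintro r ⟨t, -, rfl⟩; positivity

lemma norm_le_supIcc (hg : ContinuousOn g (Icc a b)) {t : ℝ} (ht : t ∈ Icc a b) :
    ‖g t‖ ≤ supIcc a b g :=
  le_csSup (isCompact_Icc.bddAbove_image hg.norm) ⟨t, ht, rfl⟩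

lemma supIcc_le {M : ℝ} (hM : 0 ≤ M) (h : ∀ t ∈ Icc a b, ‖g t‖ ≤ M) : supIcc a b g ≤ M :=
  Real.sSup_le (by rintro r ⟨t, ht, rfl⟩; exact h t ht) hM

lemma supIcc_congr (h : EqOn g g' (Icc a b)) : supIcc a b g = supIcc a b g' := by
  unfold supIcc
  rw [image_congr fun t ht => by rw [h ht]]

lemma holderSemi_nonneg (a b α : ℝ) (g : ℝ → ℂ) : 0 ≤ holderSemi a b α g :=
  Real.sSup_nonneg <| by rintro r ⟨s, -, t, -, -, rfl⟩; positivity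

lemma holderSemi_le {K : ℝ} (hK : 0 ≤ K)
    (h : ∀ s ∈ Icc a b, ∀ t ∈ Icc a b, ‖g s - g t‖ ≤ K * |s - t| ^ α) :
    holderSemi a b α g ≤ K := by
  refine Real.sSup_le ?_ hK
  rintro r ⟨s, hs, t, ht, hst, rfl⟩
  rw [div_le_iff₀ (Real.rpow_pos_of_pos (abs_pos.2 (sub_ne_zero.2 hst)) α)]
  exact h s hs t ht

lemma norm_sub_le_holderSemi_mul {K : ℝ}
    (h : ∀ s ∈ Icc a b, ∀ t ∈ Icc a b, ‖g s - g t‖ ≤ K * |s - t| ^ α)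
    {s t : ℝ} (hs : s ∈ Icc a b) (ht : t ∈ Icc a b) :
    ‖g s - g t‖ ≤ holderSemi a b α g * |s - t| ^ α := by
  rcases eq_or_ne s t with rfl | hst
  · simpa using mul_nonneg (holderSemi_nonneg a b α g) (Real.rpow_nonneg le_rfl α)
  have hpos (s t : ℝ) (hst : s ≠ t) : 0 < |s - t| ^ α :=
    Real.rpow_pos_of_pos (abs_pos.2 (sub_ne_zero.2 hst)) α
  have hbdd : BddAbove {r : ℝ | ∃ s ∈ Icc a b, ∃ t ∈ Icc a b,
      s ≠ t ∧ r = ‖g s - g t‖ / |s - t| ^ α} := by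
    refine ⟨K, ?_⟩
    rintro r ⟨s', hs', t', ht', hst', rfl⟩
    exact (div_le_iff₀ (hpos s' t' hst')).2 (h s' hs' t' ht')
  rw [← div_le_iff₀ (hpos s t hst)]
  exact le_csSup hbdd ⟨s, hs, t, ht, hst, rfl⟩

lemma holderSemi_congr (h : EqOn g g' (Icc a b)) :
    holderSemi a b α g = holderSemi a b α g' := by
  unfold holderSemi
  congr 1
  ext r
  constructor <;>
  · rintro ⟨s, hs, t, ht, hst, rfl⟩
    exact ⟨s, hs, t, ht, hst, by rw [h hs, h ht]⟩

end Seminorms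

section Norms

variable {a b α : ℝ} {l i : ℕ} {x y : ℝ → ℂ}

lemma cNorm_nonneg (a b : ℝ) (l : ℕ) (x : ℝ → ℂ) : 0 ≤ cNorm a b l x :=
  Finset.sum_nonneg fun _ _ => supIcc_nonneg a b _

lemma supIcc_le_cNorm (hi : i ≤ l) :
    supIcc a b (iteratedDerivWithin i x (Icc a b)) ≤ cNorm a b l x :=
  Finset.single_le_sum (f := fun j => supIcc a b (iteratedDerivWithin j x (Icc a b)))
    (fun _ _ => supIcc_nonneg a b _) (Finset.mem_range.2 (Nat.lt_succ_of_le hi))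

lemma cNorm_mono {l' : ℕ} (hl : l ≤ l') : cNorm a b l x ≤ cNorm a b l' x :=
  Finset.sum_le_sum_of_subset_of_nonneg (Finset.range_subset_range.2 (Nat.succ_le_succ hl))
    fun _ _ _ => supIcc_nonneg a b _

lemma cNorm_le_holderNorm : cNorm a b l x ≤ holderNorm a b l α x := by
  unfold holderNorm
  split_ifs
  · simp
  · linarith [holderSemi_nonneg a b α (iteratedDerivWithin l x (Icc a b))]

lemma holderSemi_le_holderNorm (hα : α ≠ 0) :
    holderSemi a b α (iteratedDerivWithin l x (Icc a b)) ≤ holderNorm a b l α x := by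
  rw [holderNorm, if_neg hα]
  linarith [cNorm_nonneg a b l x]

lemma holderNorm_nonneg (a b : ℝ) (l : ℕ) (α : ℝ) (x : ℝ → ℂ) : 0 ≤ holderNorm a b l α x :=
  (cNorm_nonneg a b l x).trans cNorm_le_holderNorm

lemma holderNorm_congr (h : EqOn x y (Icc a b)) :
    holderNorm a b l α x = holderNorm a b l α y := by
  simp only [holderNorm, cNorm, supIcc_congr (iteratedDerivWithin_congr h),
    holderSemi_congr (iteratedDerivWithin_congr h)]

lemma norm_iteratedDerivWithin_le_cNorm (hab : a < b) (hx : ContDiffOn ℝ l x (Icc a b))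
    (hi : i ≤ l) {t : ℝ} (ht : t ∈ Icc a b) :
    ‖iteratedDerivWithin i x (Icc a b) t‖ ≤ cNorm a b l x :=
  (norm_le_supIcc (hx.continuousOn_iteratedDerivWithin (by exact_mod_cast hi)
    (uniqueDiffOn_Icc hab)) ht).trans (supIcc_le_cNorm hi)

lemma abs_sub_le_mul_rpow (hα1 : α ≤ 1) {s t : ℝ} (hs : s ∈ Icc a b) (ht : t ∈ Icc a b) :
    |s - t| ≤ (b - a) ^ (1 - α) * |s - t| ^ α := by
  rcases eq_or_ne s t with rfl | hst
  · simpa using mul_nonneg (Real.rpow_nonneg (by linarith [hs.1, hs.2]) (1 - α))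
      (Real.rpow_nonneg le_rfl α)
  have hd : 0 < |s - t| := abs_pos.2 (sub_ne_zero.2 hst)
  have hdle : |s - t| ≤ b - a :=
    abs_sub_le_iff.2 ⟨by linarith [hs.2, ht.1], by linarith [hs.1, ht.2]⟩
  calc |s - t| = |s - t| ^ (1 - α) * |s - t| ^ α := by
        rw [← Real.rpow_add hd, sub_add_cancel, Real.rpow_one]
    _ ≤ (b - a) ^ (1 - α) * |s - t| ^ α := by gcongr

/-- The mean value inequality, turned into an `α`-Hölder bound on the compact interval. -/
lemma norm_iteratedDerivWithin_sub_le (hab : a < b) (hα1 : α ≤ 1)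
    (hx : ContDiffOn ℝ l x (Icc a b)) (hi : i < l) {s t : ℝ}
    (hs : s ∈ Icc a b) (ht : t ∈ Icc a b) :
    ‖iteratedDerivWithin i x (Icc a b) s - iteratedDerivWithin i x (Icc a b) t‖
      ≤ (b - a) ^ (1 - α) * cNorm a b l x * |s - t| ^ α := by
  have hS := uniqueDiffOn_Icc hab
  have hder : ∀ u ∈ Icc a b, HasDerivWithinAt (iteratedDerivWithin i x (Icc a b))
      (iteratedDerivWithin (i + 1) x (Icc a b) u) (Icc a b) u := fun u hu => by
    rw [iteratedDerivWithin_succ]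
    exact ((hx.differentiableOn_iteratedDerivWithin (by exact_mod_cast hi) hS) u
      hu).hasDerivWithinAt
  have hlip := (convex_Icc a b).norm_image_sub_le_of_norm_hasDerivWithin_le hder
    (fun u hu => norm_iteratedDerivWithin_le_cNorm hab hx hi hu) ht hs
  rw [Real.norm_eq_abs] at hlip
  calc _ ≤ cNorm a b l x * |s - t| := hlip
    _ ≤ cNorm a b l x * ((b - a) ^ (1 - α) * |s - t| ^ α) :=
        mul_le_mul_of_nonneg_left (abs_sub_le_mul_rpow hα1 hs ht) (cNorm_nonneg a b l x)
    _ = _ := by ring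

end Norms

lemma norm_sum_choose_mul_le {l : ℕ} {u v : ℕ → ℂ} {F G : ℝ} (hu : ∀ j ≤ l, ‖u j‖ ≤ F)
    (hv : ∀ j ≤ l, ‖v j‖ ≤ G) :
    ‖∑ j ∈ Finset.range (l + 1), (l.choose j : ℂ) * u j * v (l - j)‖ ≤ 2 ^ l * (F * G) := by
  calc _ ≤ ∑ j ∈ Finset.range (l + 1), (l.choose j : ℝ) * (F * G) := by
        refine (norm_sum_le _ _).trans (Finset.sum_le_sum fun j hj => ?_)
        have hj := Nat.lt_succ_iff.1 (Finset.mem_range.1 hj)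
        rw [norm_mul, norm_mul, Complex.norm_natCast, mul_assoc]
        gcongr
        · exact (norm_nonneg _).trans (hu j hj)
        · exact hu j hj
        · exact hv (l - j) (Nat.sub_le l j)
    _ = 2 ^ l * (F * G) := by
        rw [← Finset.sum_mul, ← Nat.cast_sum, Nat.sum_range_choose]
        push_cast
        ring

/-- Up to constants depending only on `a`, `b`, `l`, `α`, the ball of radius `K` in `C^{l,α}`,
in a pointwise form that passes directly through finite sums and Leibniz' rule. -/
structure HolderBounded (a b : ℝ) (l : ℕ) (α K : ℝ) (x : ℝ → ℂ) : Prop where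
  contDiffOn : ContDiffOn ℝ l x (Icc a b)
  norm_le : ∀ i ≤ l, ∀ t ∈ Icc a b, ‖iteratedDerivWithin i x (Icc a b) t‖ ≤ K
  norm_sub_le : ∀ i ≤ l, ∀ s ∈ Icc a b, ∀ t ∈ Icc a b,
    ‖iteratedDerivWithin i x (Icc a b) s - iteratedDerivWithin i x (Icc a b) t‖
      ≤ K * |s - t| ^ α

namespace HolderBounded

variable {a b α K K' : ℝ} {l : ℕ} {x : ℝ → ℂ}

lemma nonneg (hab : a ≤ b) (hx : HolderBounded a b l α K x) : 0 ≤ K :=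
  (norm_nonneg _).trans (hx.norm_le 0 l.zero_le a (left_mem_Icc.2 hab))

lemma mono (hx : HolderBounded a b l α K x) (hK : K ≤ K') : HolderBounded a b l α K' x where
  contDiffOn := hx.contDiffOn
  norm_le i hi t ht := (hx.norm_le i hi t ht).trans hK
  norm_sub_le i hi s hs t ht := (hx.norm_sub_le i hi s hs t ht).trans
    (mul_le_mul_of_nonneg_right hK (Real.rpow_nonneg (abs_nonneg _) α))

lemma inHolder (hx : HolderBounded a b l α K x) : InHolder a b l α x :=
  ⟨hx.contDiffOn, or_iff_not_imp_left.2 fun _ => ⟨K, hx.norm_sub_le l le_rfl⟩⟩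

lemma holderNorm_le (hab : a ≤ b) (hx : HolderBounded a b l α K x) :
    holderNorm a b l α x ≤ (l + 2) * K := by
  have hK := hx.nonneg hab
  have hc : cNorm a b l x ≤ (l + 1) * K := by
    calc cNorm a b l x ≤ ∑ _j ∈ Finset.range (l + 1), K :=
          Finset.sum_le_sum fun j hj =>
            supIcc_le hK (hx.norm_le j (Nat.lt_succ_iff.1 (Finset.mem_range.1 hj)))
      _ = (l + 1) * K := by simp
  have hs : holderSemi a b α (iteratedDerivWithin l x (Icc a b)) ≤ K :=
    holderSemi_le hK (hx.norm_sub_le l le_rfl)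
  unfold holderNorm
  split_ifs <;> linarith

/-- Leibniz' rule: the `α`-Hölder difference of `(f g)^{(i)}` splits as
`∑ (i choose j) (Δ f^{(j)} g^{(i-j)}(s) + f^{(j)}(t) Δ g^{(i-j)})`. -/
lemma mul (hab : a < b) {f g : ℝ → ℂ} {F G : ℝ} (hf : HolderBounded a b l α F f)
    (hg : HolderBounded a b l α G g) :
    HolderBounded a b l α (2 ^ (l + 1) * F * G) (fun t => f t * g t) := by
  have hS := uniqueDiffOn_Icc hab
  have hF := hf.nonneg hab.le
  have hG := hg.nonneg hab.le
  have hleib : ∀ i ≤ l, ∀ t ∈ Icc a b, iteratedDerivWithin i (fun t => f t * g t) (Icc a b) t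
      = ∑ j ∈ Finset.range (i + 1), (i.choose j : ℂ) * iteratedDerivWithin j f (Icc a b) t
          * iteratedDerivWithin (i - j) g (Icc a b) t := fun i hi t ht =>
    iteratedDerivWithin_mul ht hS (hf.contDiffOn.of_le (by exact_mod_cast hi) t ht)
      (hg.contDiffOn.of_le (by exact_mod_cast hi) t ht)
  refine ⟨hf.contDiffOn.mul hg.contDiffOn, fun i hi t ht => ?_, fun i hi s hs t ht => ?_⟩
  · rw [hleib i hi t ht]
    refine (norm_sum_choose_mul_le (fun j hj => hf.norm_le j (hj.trans hi) t ht)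
      (fun j hj => hg.norm_le j (hj.trans hi) t ht)).trans ?_
    rw [mul_assoc]
    exact mul_le_mul_of_nonneg_right (pow_le_pow_right₀ one_le_two (hi.trans l.le_succ))
      (mul_nonneg hF hG)
  · set df := fun j => iteratedDerivWithin j f (Icc a b)
    set dg := fun j => iteratedDerivWithin j g (Icc a b)
    have hsplit : ∑ j ∈ Finset.range (i + 1), (i.choose j : ℂ) * df j s * dg (i - j) s
        - ∑ j ∈ Finset.range (i + 1), (i.choose j : ℂ) * df j t * dg (i - j) t
        = ∑ j ∈ Finset.range (i + 1), (i.choose j : ℂ) * (df j s - df j t) * dg (i - j) s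
          + ∑ j ∈ Finset.range (i + 1),
              (i.choose j : ℂ) * df j t * (dg (i - j) s - dg (i - j) t) := by
      rw [← Finset.sum_sub_distrib, ← Finset.sum_add_distrib]
      exact Finset.sum_congr rfl fun j _ => by ring
    rw [hleib i hi s hs, hleib i hi t ht, hsplit]
    have h₁ := norm_sum_choose_mul_le (u := fun j => df j s - df j t) (v := fun j => dg j s)
      (fun j hj => hf.norm_sub_le j (hj.trans hi) s hs t ht)
      (fun j hj => hg.norm_le j (hj.trans hi) s hs)
    have h₂ := norm_sum_choose_mul_le (u := fun j => df j t) (v := fun j => dg j s - dg j t)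
      (fun j hj => hf.norm_le j (hj.trans hi) t ht)
      (fun j hj => hg.norm_sub_le j (hj.trans hi) s hs t ht)
    calc _ ≤ 2 ^ i * (F * |s - t| ^ α * G) + 2 ^ i * (F * (G * |s - t| ^ α)) :=
          (norm_add_le _ _).trans (add_le_add h₁ h₂)
      _ = 2 ^ (i + 1) * F * G * |s - t| ^ α := by ring
      _ ≤ 2 ^ (l + 1) * F * G * |s - t| ^ α := by
          gcongr
          exact one_le_two

lemma sum (hab : a < b) {ι : Type*} {u : Finset ι} {f : ι → ℝ → ℂ} {K : ι → ℝ}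
    (hf : ∀ k ∈ u, HolderBounded a b l α (K k) (f k)) :
    HolderBounded a b l α (∑ k ∈ u, K k) (fun t => ∑ k ∈ u, f k t) := by
  have hS := uniqueDiffOn_Icc hab
  have hsum : ∀ i ≤ l, ∀ t ∈ Icc a b, iteratedDerivWithin i (fun t => ∑ k ∈ u, f k t) (Icc a b) t
      = ∑ k ∈ u, iteratedDerivWithin i (f k) (Icc a b) t := fun i hi t ht =>
    iteratedDerivWithin_fun_sum ht hS fun k hk =>
      ((hf k hk).contDiffOn.of_le (by exact_mod_cast hi)) t ht
  refine ⟨ContDiffOn.sum fun k hk => (hf k hk).contDiffOn, fun i hi t ht => ?_,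
    fun i hi s hs t ht => ?_⟩
  · rw [hsum i hi t ht]
    exact (norm_sum_le _ _).trans (Finset.sum_le_sum fun k hk => (hf k hk).norm_le i hi t ht)
  · rw [hsum i hi s hs, hsum i hi t ht, ← Finset.sum_sub_distrib, Finset.sum_mul]
    exact (norm_sum_le _ _).trans
      (Finset.sum_le_sum fun k hk => (hf k hk).norm_sub_le i hi s hs t ht)

end HolderBounded

section HolderBoundedOfNorm

variable {a b α β : ℝ} {l : ℕ} {x : ℝ → ℂ}

lemma InHolder.holderBounded (hab : a < b) (hα1 : α ≤ 1) (hx : InHolder a b l α x) :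
    HolderBounded a b l α ((2 + (b - a) ^ (1 - α)) * holderNorm a b l α x) x := by
  set N := holderNorm a b l α x
  have hba : 0 ≤ (b - a) ^ (1 - α) := Real.rpow_nonneg (by linarith) _
  have hc : cNorm a b l x ≤ N := cNorm_le_holderNorm
  have hc0 := cNorm_nonneg a b l x
  refine ⟨hx.1, fun i hi t ht => ?_, fun i hi s hs t ht => ?_⟩
  · calc _ ≤ cNorm a b l x := norm_iteratedDerivWithin_le_cNorm hab hx.1 hi ht
      _ ≤ (2 + (b - a) ^ (1 - α)) * N := by nlinarith
  rcases hi.lt_or_eq with hi | rfl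
  · calc _ ≤ (b - a) ^ (1 - α) * cNorm a b l x * |s - t| ^ α :=
          norm_iteratedDerivWithin_sub_le hab hα1 hx.1 hi hs ht
      _ ≤ (2 + (b - a) ^ (1 - α)) * N * |s - t| ^ α := by gcongr; linarith
  by_cases hα : α = 0
  · subst hα
    have hs := norm_iteratedDerivWithin_le_cNorm hab hx.1 le_rfl hs
    have ht := norm_iteratedDerivWithin_le_cNorm hab hx.1 le_rfl ht
    rw [Real.rpow_zero, mul_one]
    refine (norm_sub_le _ _).trans ?_
    nlinarith
  · obtain ⟨K, hK⟩ := hx.2.resolve_left hα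
    have hsemi := holderSemi_le_holderNorm (a := a) (b := b) (l := i) (x := x) hα
    calc _ ≤ holderSemi a b α (iteratedDerivWithin i x (Icc a b)) * |s - t| ^ α :=
          norm_sub_le_holderSemi_mul hK hs ht
      _ ≤ (2 + (b - a) ^ (1 - α)) * N * |s - t| ^ α := by gcongr; nlinarith

lemma holderBounded_of_contDiffOn_succ (hab : a < b) (hβ1 : β ≤ 1)
    (hx : ContDiffOn ℝ (l + 1) x (Icc a b)) :
    HolderBounded a b l β ((1 + (b - a) ^ (1 - β)) * cNorm a b (l + 1) x) x := by
  have hba : 0 ≤ (b - a) ^ (1 - β) := Real.rpow_nonneg (by linarith) _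
  have hc0 := cNorm_nonneg a b (l + 1) x
  refine ⟨hx.of_le (by norm_cast; exact l.le_succ), fun i hi t ht => ?_, fun i hi s hs t ht => ?_⟩
  · calc _ ≤ cNorm a b (l + 1) x := norm_iteratedDerivWithin_le_cNorm hab hx (hi.trans l.le_succ) ht
      _ ≤ (1 + (b - a) ^ (1 - β)) * cNorm a b (l + 1) x := by nlinarith
  · calc _ ≤ (b - a) ^ (1 - β) * cNorm a b (l + 1) x * |s - t| ^ β :=
          norm_iteratedDerivWithin_sub_le hab hβ1 hx (Nat.lt_succ_of_le hi) hs ht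
      _ ≤ (1 + (b - a) ^ (1 - β)) * cNorm a b (l + 1) x * |s - t| ^ β := by gcongr; linarith

lemma holderBounded_zero_of_contDiffOn (hab : a < b) (hx : ContDiffOn ℝ l x (Icc a b)) :
    HolderBounded a b l 0 (2 * cNorm a b l x) x := by
  have hc0 := cNorm_nonneg a b l x
  have hle {i t} (hi : i ≤ l) (ht : t ∈ Icc a b) := norm_iteratedDerivWithin_le_cNorm hab hx hi ht
  refine ⟨hx, fun i hi t ht => (hle hi ht).trans (by linarith), fun i hi s hs t ht => ?_⟩
  rw [Real.rpow_zero, mul_one, two_mul]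
  exact (norm_sub_le _ _).trans (add_le_add (hle hi hs) (hle hi ht))

lemma holderBounded_of_contDiffOn (hab : a < b) (hα1 : α ≤ 1)
    (hx : ContDiffOn ℝ (l + 1) x (Icc a b)) :
    HolderBounded a b l α
      ((2 + (b - a) ^ (1 - α)) * cNorm a b (if α = 0 then l else l + 1) x) x := by
  have hba : 0 ≤ (b - a) ^ (1 - α) := Real.rpow_nonneg (by linarith) _
  split_ifs with hα
  · subst hα
    refine (holderBounded_zero_of_contDiffOn hab (hx.of_le (by norm_cast; exact l.le_succ))).mono ?_
    nlinarith [cNorm_nonneg a b l x]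
  · refine (holderBounded_of_contDiffOn_succ hab hα1 hx).mono ?_
    nlinarith [cNorm_nonneg a b (l + 1) x]

lemma holderBounded_of_holderNorm_le_one (hab : a < b) (hα1 : α ≤ 1)
    (hx : InHolder a b (l + 1) α x) (hx1 : holderNorm a b (l + 1) α x ≤ 1) :
    HolderBounded a b (if α = 0 then l else l + 1) (if α = 0 then 1 else α)
      (2 + (b - a) ^ (1 - α)) x := by
  split_ifs with hα
  · subst hα
    refine (holderBounded_of_contDiffOn_succ hab le_rfl hx.1).mono ?_
    have : cNorm a b (l + 1) x ≤ 1 := cNorm_le_holderNorm.trans hx1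
    norm_num
    linarith
  · refine (hx.holderBounded hab hα1).mono ?_
    have : 0 ≤ (b - a) ^ (1 - α) := Real.rpow_nonneg (by linarith) _
    nlinarith

end HolderBoundedOfNorm

section Primitive

variable {a b α t₀ : ℝ} {l : ℕ} {h : ℝ → ℂ}

lemma holderNorm_succ (x : ℝ → ℂ) :
    holderNorm a b (l + 1) α x
      = supIcc a b x + holderNorm a b l α (derivWithin x (Icc a b)) := by
  simp only [holderNorm, cNorm, Finset.sum_range_succ' _ (l + 1), iteratedDerivWithin_succ',
    iteratedDerivWithin_zero]
  ring

lemma hasDerivWithinAt_primitive (ht₀ : t₀ ∈ Icc a b) (hh : ContinuousOn h (Icc a b))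
    {t : ℝ} (ht : t ∈ Icc a b) :
    HasDerivWithinAt (fun u => ∫ s in t₀..u, h s) (h t) (Icc a b) t := by
  have : Fact (t ∈ Icc a b) := ⟨ht⟩
  exact intervalIntegral.integral_hasDerivWithinAt_right
    (hh.mono (uIcc_subset_Icc ht₀ ht)).intervalIntegrable
    (hh.stronglyMeasurableAtFilter_nhdsWithin measurableSet_Icc t) (hh t ht)

lemma supIcc_primitive_le (ht₀ : t₀ ∈ Icc a b) (hh : ContinuousOn h (Icc a b)) :
    supIcc a b (fun u => ∫ s in t₀..u, h s) ≤ (b - a) * supIcc a b h := by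
  have hab : a ≤ b := ht₀.1.trans ht₀.2
  refine supIcc_le (mul_nonneg (by linarith) (supIcc_nonneg a b h)) fun t ht => ?_
  calc ‖∫ s in t₀..t, h s‖ ≤ supIcc a b h * |t - t₀| :=
        intervalIntegral.norm_integral_le_of_norm_le_const fun s hs =>
          norm_le_supIcc hh (uIcc_subset_Icc ht₀ ht (uIoc_subset_uIcc hs))
    _ ≤ supIcc a b h * (b - a) := by
        gcongr
        · exact supIcc_nonneg a b h
        · exact abs_sub_le_iff.2 ⟨by linarith [ht.2, ht₀.1], by linarith [ht.1, ht₀.2]⟩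
    _ = (b - a) * supIcc a b h := mul_comm _ _

lemma InHolder.primitive (hab : a < b) (ht₀ : t₀ ∈ Icc a b) (hh : InHolder a b l α h) :
    InHolder a b (l + 1) α (fun u => ∫ s in t₀..u, h s) ∧
    holderNorm a b (l + 1) α (fun u => ∫ s in t₀..u, h s)
      ≤ (1 + (b - a)) * holderNorm a b l α h := by
  have hS := uniqueDiffOn_Icc hab
  have hcont := hh.1.continuousOn
  have hder := fun t (ht : t ∈ Icc a b) => hasDerivWithinAt_primitive ht₀ hcont ht
  have hP' : EqOn (derivWithin (fun u => ∫ s in t₀..u, h s) (Icc a b)) h (Icc a b) :=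
    fun t ht => (hder t ht).derivWithin (hS.uniqueDiffWithinAt ht)
  have hD : EqOn (iteratedDerivWithin (l + 1) (fun u => ∫ s in t₀..u, h s) (Icc a b))
      (iteratedDerivWithin l h (Icc a b)) (Icc a b) := by
    rw [iteratedDerivWithin_succ']
    exact iteratedDerivWithin_congr hP'
  refine ⟨⟨?_, hh.2.imp_right fun ⟨K, hK⟩ => ⟨K, fun s hs t ht => by
    rw [hD hs, hD ht]; exact hK s hs t ht⟩⟩, ?_⟩
  · push_cast
    rw [contDiffOn_succ_iff_derivWithin hS]
    exact ⟨fun t ht => (hder t ht).differentiableWithinAt, by simp, hh.1.congr hP'⟩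
  · have hsup : supIcc a b h ≤ holderNorm a b l α h := by
      simpa using (supIcc_le_cNorm (x := h) l.zero_le).trans (cNorm_le_holderNorm (α := α))
    rw [holderNorm_succ, holderNorm_congr hP']
    nlinarith [supIcc_primitive_le ht₀ hcont]

end Primitive

noncomputable def cNormM (a b : ℝ) (l : ℕ) {m : ℕ} (Y : ℝ → Matrix (Fin m) (Fin m) ℂ) : ℝ :=
  ∑ i, ∑ j, cNorm a b l fun t => Y t i j

/-- `1 + (b - a)` comes from integration, `n + 2` from `HolderBounded.holderNorm_le`, `2 ^ (n + 1)`
from Leibniz' rule, and one factor `2 + (b - a) ^ (1 - α)` each from `A` and from `Y`. -/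
noncomputable def vopConst (a b : ℝ) (n : ℕ) (α : ℝ) : ℝ :=
  (1 + (b - a)) * (n + 2) * 2 ^ (n + 1) * (2 + (b - a) ^ (1 - α)) ^ 2

section Matrices

variable {a b α t₀ : ℝ} {l n m : ℕ} {A X Y Z : ℝ → Matrix (Fin m) (Fin m) ℂ}

lemma vopConst_pos (hab : a < b) : 0 < vopConst a b n α := by
  have : 0 ≤ (b - a) ^ (1 - α) := Real.rpow_nonneg (by linarith) _
  unfold vopConst
  have : (0 : ℝ) < 1 + (b - a) := by linarith
  positivity

lemma holderNormM_nonneg (a b : ℝ) (l : ℕ) (α : ℝ) (A : ℝ → Matrix (Fin m) (Fin m) ℂ) :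
    0 ≤ holderNormM a b l α A :=
  Finset.sum_nonneg fun _ _ => Finset.sum_nonneg fun _ _ => holderNorm_nonneg _ _ _ _ _

lemma holderNorm_le_holderNormM (i j : Fin m) :
    holderNorm a b l α (fun t => Y t i j) ≤ holderNormM a b l α Y :=
  (Finset.single_le_sum (f := fun j' => holderNorm a b l α fun t => Y t i j')
      (fun _ _ => holderNorm_nonneg _ _ _ _ _) (Finset.mem_univ j)).trans
    (Finset.single_le_sum (f := fun i' => ∑ j', holderNorm a b l α fun t => Y t i' j')
      (fun _ _ => Finset.sum_nonneg fun _ _ => holderNorm_nonneg _ _ _ _ _) (Finset.mem_univ i))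

lemma holderNormM_congr (h : EqOn X Z (Icc a b)) :
    holderNormM a b l α X = holderNormM a b l α Z := by
  unfold holderNormM
  exact Finset.sum_congr rfl fun i _ => Finset.sum_congr rfl fun j _ =>
    holderNorm_congr fun t ht => by rw [h ht]

lemma cNormM_le_holderNormM {J : ℕ} (hJ : J ≤ l) : cNormM a b J Y ≤ holderNormM a b l α Y :=
  Finset.sum_le_sum fun _ _ => Finset.sum_le_sum fun _ _ =>
    (cNorm_mono hJ).trans cNorm_le_holderNorm

lemma sum_sum_sum_mul_le {ι : Type*} [Fintype ι] {u v : ι → ι → ℝ} (hu : ∀ i k, 0 ≤ u i k)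
    (hv : ∀ k j, 0 ≤ v k j) :
    ∑ i, ∑ j, ∑ k, u i k * v k j ≤ (∑ i, ∑ k, u i k) * ∑ k, ∑ j, v k j := by
  have hrow (k : ι) : ∑ j, v k j ≤ ∑ k', ∑ j, v k' j :=
    Finset.single_le_sum (f := fun k => ∑ j, v k j)
      (fun k _ => Finset.sum_nonneg fun j _ => hv k j) (Finset.mem_univ k)
  calc _ = ∑ i, ∑ k, u i k * ∑ j, v k j := by
        simp only [Finset.mul_sum]
        exact Finset.sum_congr rfl fun i _ => Finset.sum_comm
    _ ≤ ∑ i, ∑ k, u i k * ∑ k', ∑ j, v k' j :=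
        Finset.sum_le_sum fun i _ => Finset.sum_le_sum fun k _ =>
          mul_le_mul_of_nonneg_left (hrow k) (hu i k)
    _ = _ := by simp only [Finset.sum_mul]

lemma continuousOn_mul_apply (hA : ∀ i j, ContinuousOn (fun t => A t i j) (Icc a b))
    (hY : ∀ i j, ContinuousOn (fun t => Y t i j) (Icc a b)) (i j : Fin m) :
    ContinuousOn (fun t => (A t * Y t) i j) (Icc a b) := by
  simp only [Matrix.mul_apply]
  exact continuousOn_finsetSum _ fun k _ => (hA i k).mul (hY k j)

lemma vop_sub_eqOn (ht₀ : t₀ ∈ Icc a b) (hA : ∀ i j, ContinuousOn (fun t => A t i j) (Icc a b))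
    (hY : ∀ i j, ContinuousOn (fun t => Y t i j) (Icc a b))
    (hZ : ∀ i j, ContinuousOn (fun t => Z t i j) (Icc a b)) :
    EqOn (fun t => Vop t₀ A Y t - Vop t₀ A Z t) (Vop t₀ A fun t => Y t - Z t) (Icc a b) := by
  intro t ht
  ext i j
  have hint (W : ℝ → Matrix (Fin m) (Fin m) ℂ)
      (hW : ∀ i j, ContinuousOn (fun t => W t i j) (Icc a b)) :
      IntervalIntegrable (fun s => (A s * W s) i j) MeasureTheory.volume t₀ t :=
    ((continuousOn_mul_apply hA hW i j).mono (uIcc_subset_Icc ht₀ ht)).intervalIntegrable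
  simp only [Vop, Matrix.sub_apply, Matrix.of_apply, Matrix.mul_sub]
  exact (intervalIntegral.integral_sub (hint Y hY) (hint Z hZ)).symm

lemma holderBounded_mul_apply (hab : a < b) (hα1 : α ≤ 1) (hA : InHolderM a b n α A)
    (hY : ∀ i j, ContDiffOn ℝ (n + 1) (fun t => Y t i j) (Icc a b)) (i j : Fin m) :
    HolderBounded a b n α
      (∑ k, 2 ^ (n + 1) * ((2 + (b - a) ^ (1 - α)) * holderNorm a b n α (fun t => A t i k))
        * ((2 + (b - a) ^ (1 - α)) * cNorm a b (if α = 0 then n else n + 1) (fun t => Y t k j)))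
      (fun t => (A t * Y t) i j) :=
  HolderBounded.sum hab fun k _ =>
    ((hA i k).holderBounded hab hα1).mul hab (holderBounded_of_contDiffOn hab hα1 (hY k j))

lemma vop_estimate (hab : a < b) (hα1 : α ≤ 1) (ht₀ : t₀ ∈ Icc a b) (hA : InHolderM a b n α A)
    (hY : ∀ i j, ContDiffOn ℝ (n + 1) (fun t => Y t i j) (Icc a b)) :
    InHolderM a b (n + 1) α (Vop t₀ A Y) ∧
    holderNormM a b (n + 1) α (Vop t₀ A Y)
      ≤ vopConst a b n α * holderNormM a b n α A * cNormM a b (if α = 0 then n else n + 1) Y := by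
  set L := 2 + (b - a) ^ (1 - α)
  set J := if α = 0 then n else n + 1
  have hentry (i j : Fin m) :=
    (holderBounded_mul_apply hab hα1 hA hY i j).inHolder.primitive hab ht₀
  refine ⟨fun i j => (hentry i j).1, ?_⟩
  calc holderNormM a b (n + 1) α (Vop t₀ A Y)
      ≤ ∑ i, ∑ j, (1 + (b - a)) * ((n + 2) * ∑ k, 2 ^ (n + 1)
          * (L * holderNorm a b n α (fun t => A t i k)) * (L * cNorm a b J (fun t => Y t k j))) :=
        Finset.sum_le_sum fun i _ => Finset.sum_le_sum fun j _ => (hentry i j).2.trans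
          (mul_le_mul_of_nonneg_left ((holderBounded_mul_apply hab hα1 hA hY i j).holderNorm_le
            hab.le) (by linarith))
    _ = vopConst a b n α * ∑ i, ∑ j, ∑ k,
          holderNorm a b n α (fun t => A t i k) * cNorm a b J (fun t => Y t k j) := by
        simp only [vopConst, Finset.mul_sum]
        exact Finset.sum_congr rfl fun i _ => Finset.sum_congr rfl fun j _ =>
          Finset.sum_congr rfl fun k _ => by ring
    _ ≤ vopConst a b n α * holderNormM a b n α A * cNormM a b J Y := by
        rw [mul_assoc]
        exact mul_le_mul_of_nonneg_left (sum_sum_sum_mul_le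
          (fun _ _ => holderNorm_nonneg _ _ _ _ _) (fun _ _ => cNorm_nonneg _ _ _ _))
          (vopConst_pos hab).le

end Matrices

section Compactness

lemma equicontinuous_of_holder {ι X E : Type*} [PseudoMetricSpace X] [PseudoMetricSpace E]
    {f : ι → X → E} {M β : ℝ} (hβ : 0 < β)
    (hf : ∀ k x y, dist (f k x) (f k y) ≤ M * dist x y ^ β) : Equicontinuous f := by
  refine Metric.equicontinuous_of_continuity_modulus (fun d => M * |d| ^ β) ?_ f
    fun x y k => by simpa only [abs_of_nonneg dist_nonneg] using hf k x y
  have hcont : Continuous fun d : ℝ => M * |d| ^ β :=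
    (continuous_abs.rpow_const fun _ => Or.inr hβ.le).const_mul M
  simpa [Real.zero_rpow hβ.ne'] using hcont.tendsto 0

lemma exists_strictMono_uniformCauchy {X E : Type*} [PseudoMetricSpace X] [CompactSpace X]
    [MetricSpace E] {s : Set E} (hs : IsCompact s) {f : ℕ → X → E} {M β : ℝ} (hβ : 0 < β)
    (hf : ∀ k x y, dist (f k x) (f k y) ≤ M * dist x y ^ β) (hfs : ∀ k x, f k x ∈ s) :
    ∃ φ : ℕ → ℕ, StrictMono φ ∧
      ∀ ε > 0, ∃ N, ∀ p ≥ N, ∀ r ≥ N, ∀ x, dist (f (φ p) x) (f (φ r) x) < ε := by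
  let G : ℕ → BoundedContinuousFunction X E := fun k =>
    BoundedContinuousFunction.mkOfCompact ⟨f k, (equicontinuous_of_holder hβ hf).continuous k⟩
  have hG : IsCompact (closure (range G)) :=
    BoundedContinuousFunction.arzela_ascoli s hs (range G)
      (by rintro _ x ⟨k, rfl⟩; exact hfs k x)
      (equicontinuous_of_holder hβ (by rintro ⟨_, k, rfl⟩ x y; exact hf k x y))
  obtain ⟨L, -, φ, hφ, hL⟩ := hG.isSeqCompact fun k => subset_closure (mem_range_self k)
  refine ⟨φ, hφ, fun ε hε => ?_⟩
  obtain ⟨N, hN⟩ := Metric.cauchySeq_iff.1 hL.cauchySeq ε hε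
  exact ⟨N, fun p hp r hr x =>
    (BoundedContinuousFunction.dist_coe_le_dist x).trans_lt (hN p hp r hr)⟩

lemma forall_lt_of_forall_le_mul {d : ℕ → ℕ → ℝ} {K : ℝ} (hK : 0 ≤ K)
    (h : ∀ ε > 0, ∃ N, ∀ p ≥ N, ∀ r ≥ N, d p r ≤ K * ε) :
    ∀ δ > 0, ∃ N, ∀ p ≥ N, ∀ r ≥ N, d p r < δ := by
  intro δ hδ
  obtain ⟨N, hN⟩ := h (δ / (K + 1)) (by positivity)
  refine ⟨N, fun p hp r hr => (hN p hp r hr).trans_lt ?_⟩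
  rw [mul_div_assoc', div_lt_iff₀ (by linarith)]
  nlinarith

variable {a b : ℝ} {m J : ℕ}

lemma exists_strictMono_cNormM_sub_lt (hab : a < b) {β M : ℝ} (hβ : 0 < β) (hM : 0 ≤ M)
    {Y : ℕ → ℝ → Matrix (Fin m) (Fin m) ℂ}
    (hY : ∀ k i j, HolderBounded a b J β M (fun t => Y k t i j)) :
    ∃ φ : ℕ → ℕ, StrictMono φ ∧
      ∀ ε > 0, ∃ N, ∀ p ≥ N, ∀ r ≥ N, cNormM a b J (fun t => Y (φ p) t - Y (φ r) t) < ε := by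
  let f : ℕ → Icc a b → Fin m × Fin m × Fin (J + 1) → ℂ := fun k x q =>
    iteratedDerivWithin q.2.2 (fun t => Y k t q.1 q.2.1) (Icc a b) x
  have hle (q : Fin m × Fin m × Fin (J + 1)) : (q.2.2 : ℕ) ≤ J := Nat.lt_succ_iff.1 q.2.2.2
  have hf : ∀ k x y, dist (f k x) (f k y) ≤ M * dist x y ^ β := fun k x y =>
    (dist_pi_le_iff (by positivity)).2 fun q => by
      rw [Complex.dist_eq, Subtype.dist_eq]
      exact (hY k q.1 q.2.1).norm_sub_le _ (hle q) x x.2 y y.2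
  have hfs : ∀ k x, f k x ∈ univ.pi fun _ => Metric.closedBall 0 M := fun k x q _ => by
    rw [Metric.mem_closedBall, dist_zero_right]
    exact (hY k q.1 q.2.1).norm_le _ (hle q) x x.2
  obtain ⟨φ, hφ, hcau⟩ := exists_strictMono_uniformCauchy
    (isCompact_univ_pi fun _ => isCompact_closedBall _ _) hβ hf hfs
  refine ⟨φ, hφ, forall_lt_of_forall_le_mul (K := m * m * (J + 1)) (by positivity)
    fun ε hε => ?_⟩
  obtain ⟨N, hN⟩ := hcau ε hε
  refine ⟨N, fun p hp r hr => ?_⟩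
  have hpt : ∀ i j, ∀ l ∈ Finset.range (J + 1), ∀ t ∈ Icc a b,
      ‖iteratedDerivWithin l (fun t => (Y (φ p) t - Y (φ r) t) i j) (Icc a b) t‖ ≤ ε := by
    intro i j l hl t ht
    have hl : l ≤ J := Nat.lt_succ_iff.1 (Finset.mem_range.1 hl)
    have hcd (k : ℕ) : ContDiffWithinAt ℝ l (fun t => Y k t i j) (Icc a b) t :=
      ((hY k i j).contDiffOn.of_le (by exact_mod_cast hl)) t ht
    rw [show (fun t => (Y (φ p) t - Y (φ r) t) i j)
      = (fun t => Y (φ p) t i j) - fun t => Y (φ r) t i j from rfl,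
      iteratedDerivWithin_sub ht (uniqueDiffOn_Icc hab) (hcd _) (hcd _), ← Complex.dist_eq]
    exact ((dist_le_pi_dist (f (φ p) ⟨t, ht⟩) (f (φ r) ⟨t, ht⟩)
      (i, j, ⟨l, Nat.lt_succ_of_le hl⟩)).trans (hN p hp r hr ⟨t, ht⟩).le)
  calc cNormM a b J (fun t => Y (φ p) t - Y (φ r) t)
      ≤ ∑ _i : Fin m, ∑ _j : Fin m, ∑ _l ∈ Finset.range (J + 1), ε :=
        Finset.sum_le_sum fun i _ => Finset.sum_le_sum fun j _ => Finset.sum_le_sum fun l hl =>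
          supIcc_le hε.le (hpt i j l hl)
    _ = m * m * (J + 1) * ε := by simp; ring

end Compactness

/-- Compactness is expressed sequentially: every sequence in the unit ball has a subsequence
whose image under `V_A` is Cauchy in the norm of `(C^{n+1,α})^{m×m}`. -/
theorem statement5_general (a b : ℝ) (hab : a < b) (n m : ℕ)
    (α : ℝ) (hα0 : 0 ≤ α) (hα1 : α ≤ 1) (t₀ : ℝ) (ht₀ : t₀ ∈ Set.Icc a b) :
    ∃ κ > (0:ℝ), ∀ A : ℝ → Matrix (Fin m) (Fin m) ℂ, InHolderM a b n α A →
      -- V_A maps (C^{n+1,α})^{m×m} into itself, with ‖V_A Y‖ ≤ κ ‖A‖ ‖Y‖ :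
      (∀ Y : ℝ → Matrix (Fin m) (Fin m) ℂ, InHolderM a b (n + 1) α Y →
        InHolderM a b (n + 1) α (Vop t₀ A Y) ∧
        holderNormM a b (n + 1) α (Vop t₀ A Y) ≤
          κ * holderNormM a b n α A * holderNormM a b (n + 1) α Y) ∧
      -- V_A is compact on (C^{n+1,α})^{m×m} :
      (∀ Y : ℕ → (ℝ → Matrix (Fin m) (Fin m) ℂ),
        (∀ k, InHolderM a b (n + 1) α (Y k) ∧ holderNormM a b (n + 1) α (Y k) ≤ 1) →
        ∃ φ : ℕ → ℕ, StrictMono φ ∧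
          ∀ δ > (0:ℝ), ∃ N : ℕ, ∀ p ≥ N, ∀ r ≥ N,
            holderNormM a b (n + 1) α
              (fun t => Vop t₀ A (Y (φ p)) t - Vop t₀ A (Y (φ r)) t) < δ) := by
  refine ⟨vopConst a b n α, vopConst_pos hab, fun A hA => ?_⟩
  have hκA : 0 ≤ vopConst a b n α * holderNormM a b n α A :=
    mul_nonneg (vopConst_pos hab).le (holderNormM_nonneg a b n α A)
  refine ⟨fun Y hY => ?_, fun Y hY => ?_⟩
  · obtain ⟨hVY, hnorm⟩ := vop_estimate hab hα1 ht₀ hA fun i j => (hY i j).1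
    refine ⟨hVY, hnorm.trans (mul_le_mul_of_nonneg_left (cNormM_le_holderNormM ?_) hκA)⟩
    split_ifs <;> omega
  · have hβ : 0 < if α = 0 then (1 : ℝ) else α := by
      split_ifs with hα
      exacts [one_pos, lt_of_le_of_ne hα0 (Ne.symm hα)]
    have hL : 0 ≤ 2 + (b - a) ^ (1 - α) := by
      have := Real.rpow_nonneg (by linarith : (0 : ℝ) ≤ b - a) (1 - α)
      linarith
    obtain ⟨φ, hφ, hcau⟩ := exists_strictMono_cNormM_sub_lt hab hβ hL fun k i j => holderBounded_of_holderNorm_le_one hab hα1 ((hY k).1 i j)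
        ((holderNorm_le_holderNormM i j).trans (hY k).2)
    refine ⟨φ, hφ, forall_lt_of_forall_le_mul hκA fun ε hε => ?_⟩
    obtain ⟨N, hN⟩ := hcau ε hε
    refine ⟨N, fun p hp r hr => ?_⟩
    have hcont (k i j) := ((hY k).1 i j).1.continuousOn
    rw [holderNormM_congr (vop_sub_eqOn ht₀ (fun i j => (hA i j).1.continuousOn)
      (hcont (φ p)) (hcont (φ r)))]
    have hW : ∀ i j, ContDiffOn ℝ (n + 1) (fun t => (Y (φ p) t - Y (φ r) t) i j) (Icc a b) :=
      fun i j => ((hY (φ p)).1 i j).1.sub ((hY (φ r)).1 i j).1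
    exact (vop_estimate hab hα1 ht₀ hA hW).2.trans
      (mul_le_mul_of_nonneg_left (hN p hp r hr).le hκA)

/-- part of Lemma 3.6: for `A ∈ (C^{n,α})^{m×m}` the operator `V_A` is a
compact linear operator on `(C^{n+1,α})^{m×m}` whose norm satisfies `‖V_A‖ ≤ κ ‖A‖_{n,α}` with
`κ > 0` independent of `A`.  Compactness is expressed by: every sequence of the unit ball has a
subsequence whose image under `V_A` is Cauchy in the norm of `(C^{n+1,α})^{m×m}`. -/
theorem statement5 (a b : ℝ) (hab : a < b) (n m : ℕ) (hm : 1 ≤ m)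
    (α : ℝ) (hα0 : 0 ≤ α) (hα1 : α ≤ 1) (t₀ : ℝ) (ht₀ : t₀ ∈ Set.Icc a b) :
    ∃ κ > (0:ℝ), ∀ A : ℝ → Matrix (Fin m) (Fin m) ℂ, InHolderM a b n α A →
      -- V_A maps (C^{n+1,α})^{m×m} into itself, with ‖V_A Y‖ ≤ κ ‖A‖ ‖Y‖ :
      (∀ Y : ℝ → Matrix (Fin m) (Fin m) ℂ, InHolderM a b (n + 1) α Y →
        InHolderM a b (n + 1) α (Vop t₀ A Y) ∧
        holderNormM a b (n + 1) α (Vop t₀ A Y) ≤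
          κ * holderNormM a b n α A * holderNormM a b (n + 1) α Y) ∧
      -- V_A is compact on (C^{n+1,α})^{m×m} :
      (∀ Y : ℕ → (ℝ → Matrix (Fin m) (Fin m) ℂ),
        (∀ k, InHolderM a b (n + 1) α (Y k) ∧ holderNormM a b (n + 1) α (Y k) ≤ 1) →
        ∃ φ : ℕ → ℕ, StrictMono φ ∧
          ∀ δ > (0:ℝ), ∃ N : ℕ, ∀ p ≥ N, ∀ r ≥ N,
            holderNormM a b (n + 1) α
              (fun t => Vop t₀ A (Y (φ p)) t - Vop t₀ A (Y (φ r)) t) < δ) :=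
  statement5_general a b hab n m α hα0 hα1 t₀ ht₀
end

section
/- Assume the family of boundary-value problems L(ε)y = f(·,ε), B(ε)y = q(ε) satisfies the Basic Definition, i.e., its solution is continuous in the parameter ε at ε = 0. For each ε ∈ [0,ε₁), let Y(·,ε) ∈ (C^{n+1,α})^{m×m} be the unique solution of the matrix boundary-value problem Y'(t,ε) + A(t,ε)Y(t,ε) = 0 on [a,b] with [B(ε)Y(·,ε)] = I_m, where [B(ε)Y] denotes the numerical m×m matrix obtained by applying B(ε) to the columns of Y. Then det Y(t,ε) ≠ 0 for every t ∈ [a,b], and Y(·,ε) → Y(·,0) in (C^{n+1,α})^{m×m} as ε → 0+. -/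
open Set Filter Topology

/-- Unique solvability of the problem `y' + Ay = f`, `By = q` in `(C^{n+1,α})^m` for all data
`f ∈ (C^{n,α})^m`, `q ∈ ℂ^m` (i.e. invertibility of the operator `(L,B)`). -/
def UniqSolv (a b : ℝ) (n : ℕ) (α : ℝ) {m : ℕ} (A : ℝ → Matrix (Fin m) (Fin m) ℂ)
    (B : (ℝ → Fin m → ℂ) →ₗ[ℂ] (Fin m → ℂ)) : Prop :=
  ∀ f : ℝ → Fin m → ℂ, ∀ q : Fin m → ℂ, InHolderV a b n α f →
    ∃ y : ℝ → Fin m → ℂ, InHolderV a b (n + 1) α y ∧ SolvesV a b A y f ∧ B y = q ∧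
      ∀ y' : ℝ → Fin m → ℂ, InHolderV a b (n + 1) α y' → SolvesV a b A y' f → B y' = q →
        Set.EqOn y' y (Set.Icc a b)

/-- Condition (0): the homogeneous limiting problem has only the trivial solution. -/
def CondZero (a b : ℝ) (n : ℕ) (α : ℝ) {m : ℕ} (A : ℝ → Matrix (Fin m) (Fin m) ℂ)
    (B : (ℝ → Fin m → ℂ) →ₗ[ℂ] (Fin m → ℂ)) : Prop :=
  ∀ y : ℝ → Fin m → ℂ, InHolderV a b (n + 1) α y → SolvesV a b A y 0 → B y = 0 →
    Set.EqOn y 0 (Set.Icc a b)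

/-- Limit Condition (I): `A(·,ε) → A(·,0)` in `(C^{n,α})^{m×m}` as `ε → 0+`. -/
def CondI (a b : ℝ) (n : ℕ) (α : ℝ) {m : ℕ} (A : ℝ → ℝ → Matrix (Fin m) (Fin m) ℂ) : Prop :=
  Filter.Tendsto (fun ε => holderNormM a b n α (fun t => A ε t - A 0 t))
    (nhdsWithin 0 (Set.Ioi 0)) (nhds 0)

/-- Limit Condition (II): `B(ε)y → B(0)y` in `ℂ^m` for every `y ∈ (C^{n+1,α})^m`. -/
def CondII (a b : ℝ) (n : ℕ) (α : ℝ) {m : ℕ}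
    (B : ℝ → (ℝ → Fin m → ℂ) →ₗ[ℂ] (Fin m → ℂ)) : Prop :=
  ∀ y : ℝ → Fin m → ℂ, InHolderV a b (n + 1) α y →
    Filter.Tendsto (fun ε => B ε y) (nhdsWithin 0 (Set.Ioi 0)) (nhds (B 0 y))

/-- Limit Condition (III): `f(·,ε) → f(·,0)` in `(C^{n,α})^m` as `ε → 0+`. -/
def CondIII (a b : ℝ) (n : ℕ) (α : ℝ) {m : ℕ} (f : ℝ → ℝ → Fin m → ℂ) : Prop :=
  Filter.Tendsto (fun ε => holderNormV a b n α (fun t => f ε t - f 0 t))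
    (nhdsWithin 0 (Set.Ioi 0)) (nhds 0)

/-- Limit Condition (IV): `q(ε) → q(0)` in `ℂ^m` as `ε → 0+`. -/
def CondIV {m : ℕ} (q : ℝ → Fin m → ℂ) : Prop :=
  Filter.Tendsto q (nhdsWithin 0 (Set.Ioi 0)) (nhds (q 0))

/-- Basic Definition: the solution to the family of boundary-value problems
`L(ε)y = f(·,ε)`, `B(ε)y = q(ε)` is continuous in the parameter `ε` at `ε = 0`:
(∗) for some `0 < ε₁ < ε₀` the problem is uniquely solvable for all `ε ∈ [0,ε₁)` and all data,
and (∗∗) Limit Conditions (III) and (IV) imply `y(·,ε) → y(·,0)` in `(C^{n+1,α})^m`. -/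
def SolContinuousInParam (a b : ℝ) (n : ℕ) (α ε₀ : ℝ) {m : ℕ}
    (A : ℝ → ℝ → Matrix (Fin m) (Fin m) ℂ)
    (B : ℝ → (ℝ → Fin m → ℂ) →ₗ[ℂ] (Fin m → ℂ)) : Prop :=
  ∃ ε₁ : ℝ, 0 < ε₁ ∧ ε₁ < ε₀ ∧
    (∀ ε ∈ Set.Ico (0:ℝ) ε₁, UniqSolv a b n α (A ε) (B ε)) ∧
    (∀ (f : ℝ → ℝ → Fin m → ℂ) (q : ℝ → Fin m → ℂ) (y : ℝ → ℝ → Fin m → ℂ),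
      (∀ ε ∈ Set.Ico (0:ℝ) ε₁, InHolderV a b n α (f ε) ∧ InHolderV a b (n + 1) α (y ε) ∧
        SolvesV a b (A ε) (y ε) (f ε) ∧ B ε (y ε) = q ε) →
      CondIII a b n α f → CondIV q →
      Filter.Tendsto (fun ε => holderNormV a b (n + 1) α (fun t => y ε t - y 0 t))
        (nhdsWithin 0 (Set.Ioi 0)) (nhds 0))

/-! If `det Y(t₀,ε) = 0`, pick `c ≠ 0` with `Y(t₀,ε) c = 0`. Then `y = Y(·,ε) c` solves the
homogeneous linear system `y' + A(·,ε) y = 0` with `y(t₀) = 0`, so `y` vanishes on `[a,b]` by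
uniqueness for Lipschitz ODEs; but `B(ε) y = c` by the boundary condition, and `B(ε)` is bounded,
so `c = 0`. For the convergence, the `k`-th column of `Y(·,ε)` solves the vector problem with the
`ε`-independent data `f = 0`, `q = e_k`, which trivially satisfy Limit Conditions (III) and (IV);
the Basic Definition then gives convergence column by column. -/

section HolderNorm

variable {a b α : ℝ} {l m : ℕ}

lemma sSup_eq_zero_of_subset_singleton {S : Set ℝ} (h : S ⊆ {0}) : sSup S = 0 :=
  le_antisymm (Real.sSup_nonpos fun _ hx => (h hx).le) (Real.sSup_nonneg fun _ hx => (h hx).ge)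

lemma iteratedDerivWithin_eqOn_zero {s : Set ℝ} {x : ℝ → ℂ} (hx : EqOn x 0 s) (j : ℕ) :
    EqOn (iteratedDerivWithin j x s) 0 s := fun t ht => by
  rw [iteratedDerivWithin_congr hx ht, Pi.zero_def, iteratedDerivWithin_const]
  split_ifs <;> rfl

lemma supIcc_eq_zero_of_eqOn_zero {g : ℝ → ℂ} (hg : EqOn g 0 (Icc a b)) : supIcc a b g = 0 :=
  sSup_eq_zero_of_subset_singleton <| by rintro _ ⟨t, ht, rfl⟩; simp [hg ht]

lemma holderSemi_eq_zero_of_eqOn_zero {g : ℝ → ℂ} (hg : EqOn g 0 (Icc a b)) :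
    holderSemi a b α g = 0 :=
  sSup_eq_zero_of_subset_singleton <| by rintro _ ⟨s, hs, t, ht, -, rfl⟩; simp [hg hs, hg ht]

lemma holderNorm_eq_zero_of_eqOn_zero {x : ℝ → ℂ} (hx : EqOn x 0 (Icc a b)) :
    holderNorm a b l α x = 0 := by
  have hd := iteratedDerivWithin_eqOn_zero hx
  simp [holderNorm, cNorm, supIcc_eq_zero_of_eqOn_zero (hd _),
    holderSemi_eq_zero_of_eqOn_zero (hd _)]

lemma inHolder_of_eqOn_zero {x : ℝ → ℂ} (hx : EqOn x 0 (Icc a b)) : InHolder a b l α x := by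
  have hd := iteratedDerivWithin_eqOn_zero hx l
  exact ⟨contDiffOn_const.congr hx, Or.inr ⟨0, fun s hs t ht => by simp [hd hs, hd ht]⟩⟩

lemma holderNormV_eq_zero_of_eqOn_zero {y : ℝ → Fin m → ℂ} (hy : EqOn y 0 (Icc a b)) :
    holderNormV a b l α y = 0 :=
  Finset.sum_eq_zero fun i _ => holderNorm_eq_zero_of_eqOn_zero fun _ ht => congrFun (hy ht) i

lemma inHolderV_of_eqOn_zero {y : ℝ → Fin m → ℂ} (hy : EqOn y 0 (Icc a b)) :
    InHolderV a b l α y :=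
  fun i => inHolder_of_eqOn_zero fun _ ht => congrFun (hy ht) i

lemma condIII_const {n : ℕ} (f : ℝ → Fin m → ℂ) : CondIII a b n α fun _ => f :=
  tendsto_const_nhds.congr fun _ =>
    (holderNormV_eq_zero_of_eqOn_zero fun _ _ => sub_self _).symm

lemma holderNormM_eq_sum_holderNormV_col (Y : ℝ → Matrix (Fin m) (Fin m) ℂ) :
    holderNormM a b l α Y = ∑ k, holderNormV a b l α (fun t j => Y t j k) :=
  Finset.sum_comm

end HolderNorm

section LinearODE

open Matrix

variable {a b t₀ : ℝ}

theorem ODE_solution_unique_of_hasDerivWithinAt_Icc {E : Type*} [NormedAddCommGroup E]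
    [NormedSpace ℝ E] {v : ℝ → E → E} {K : NNReal} {f g : ℝ → E}
    (hv : ∀ t ∈ Icc a b, LipschitzWith K (v t))
    (hf : ∀ t ∈ Icc a b, HasDerivWithinAt f (v t (f t)) (Icc a b) t)
    (hg : ∀ t ∈ Icc a b, HasDerivWithinAt g (v t (g t)) (Icc a b) t)
    (ht₀ : t₀ ∈ Icc a b) (heq : f t₀ = g t₀) : EqOn f g (Icc a b) := by
  have hfc : ContinuousOn f (Icc a b) := fun t ht => (hf t ht).continuousWithinAt
  have hgc : ContinuousOn g (Icc a b) := fun t ht => (hg t ht).continuousWithinAt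
  rw [← Icc_union_Icc_eq_Icc ht₀.1 ht₀.2]
  refine EqOn.union ?_ ?_
  · have hmem : ∀ t ∈ Ioc a t₀, t ∈ Icc a b := fun t ht => ⟨ht.1.le, ht.2.trans ht₀.2⟩
    have hnhds : ∀ t ∈ Ioc a t₀, Icc a b ∈ 𝓝[≤] t :=
      fun t ht => Icc_mem_nhdsLE_of_mem ⟨ht.1, (hmem t ht).2⟩
    exact ODE_solution_unique_of_mem_Icc_left (s := fun _ => univ)
      (fun t ht => (hv t (hmem t ht)).lipschitzOnWith) (hfc.mono (Icc_subset_Icc_right ht₀.2))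
      (fun t ht => (hf t (hmem t ht)).mono_of_mem_nhdsWithin (hnhds t ht)) (fun _ _ => trivial)
      (hgc.mono (Icc_subset_Icc_right ht₀.2))
      (fun t ht => (hg t (hmem t ht)).mono_of_mem_nhdsWithin (hnhds t ht)) (fun _ _ => trivial)
      heq
  · have hmem : ∀ t ∈ Ico t₀ b, t ∈ Icc a b := fun t ht => ⟨ht₀.1.trans ht.1, ht.2.le⟩
    have hnhds : ∀ t ∈ Ico t₀ b, Icc a b ∈ 𝓝[≥] t :=
      fun t ht => Icc_mem_nhdsGE_of_mem ⟨(hmem t ht).1, ht.2⟩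
    exact ODE_solution_unique_of_mem_Icc_right (s := fun _ => univ)
      (fun t ht => (hv t (hmem t ht)).lipschitzOnWith) (hfc.mono (Icc_subset_Icc_left ht₀.1))
      (fun t ht => (hf t (hmem t ht)).mono_of_mem_nhdsWithin (hnhds t ht)) (fun _ _ => trivial)
      (hgc.mono (Icc_subset_Icc_left ht₀.1))
      (fun t ht => (hg t (hmem t ht)).mono_of_mem_nhdsWithin (hnhds t ht)) (fun _ _ => trivial)
      heq

attribute [local instance] Matrix.linftyOpNormedAddCommGroup

theorem eqOn_zero_of_hasDerivWithinAt_neg_mulVec {m : ℕ} {A : ℝ → Matrix (Fin m) (Fin m) ℂ}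
    (hA : ∀ i j, ContinuousOn (fun t => A t i j) (Icc a b)) {y : ℝ → Fin m → ℂ}
    (hy : ∀ t ∈ Icc a b, HasDerivWithinAt y (-(A t *ᵥ y t)) (Icc a b) t)
    (ht₀ : t₀ ∈ Icc a b) (hy₀ : y t₀ = 0) : EqOn y 0 (Icc a b) := by
  obtain ⟨C, hC⟩ := isCompact_Icc.exists_bound_of_continuousOn
    (f := A) (continuousOn_pi.2 fun i => continuousOn_pi.2 (hA i))
  have hlip : ∀ t ∈ Icc a b, LipschitzWith C.toNNReal fun z => -(A t *ᵥ z) :=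
    fun t ht => LipschitzWith.of_dist_le_mul fun z w => by
      calc dist (-(A t *ᵥ z)) (-(A t *ᵥ w)) = ‖A t *ᵥ (z - w)‖ := by
            rw [dist_neg_neg, dist_eq_norm, mulVec_sub]
        _ ≤ ‖A t‖ * ‖z - w‖ := linfty_opNorm_mulVec _ _
        _ ≤ C.toNNReal * dist z w := by
            rw [dist_eq_norm]
            gcongr
            exact (hC t ht).trans (Real.le_coe_toNNReal C)
  exact ODE_solution_unique_of_hasDerivWithinAt_Icc hlip hy
    (fun t _ => by
      rw [Pi.zero_apply, mulVec_zero, neg_zero]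
      exact hasDerivWithinAt_const t (Icc a b) 0) ht₀ hy₀

end LinearODE

section MatrixProblem

open Matrix

variable {a b : ℝ} {m : ℕ} {A Y : ℝ → Matrix (Fin m) (Fin m) ℂ}

lemma hasDerivWithinAt_mulVec_of_matrixODE
    (hY : ∀ i j, DifferentiableOn ℝ (fun t => Y t i j) (Icc a b))
    (hode : ∀ t ∈ Icc a b, ∀ i j,
      derivWithin (fun s => Y s i j) (Icc a b) t + (A t * Y t) i j = 0)
    (c : Fin m → ℂ) {t : ℝ} (ht : t ∈ Icc a b) :
    HasDerivWithinAt (fun s => Y s *ᵥ c) (-(A t *ᵥ (Y t *ᵥ c))) (Icc a b) t := by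
  rw [hasDerivWithinAt_pi]
  intro i
  have hentry (j : Fin m) : HasDerivWithinAt (fun s => Y s i j) (-(A t * Y t) i j) (Icc a b) t :=
    (hY i j t ht).hasDerivWithinAt.congr_deriv (eq_neg_of_add_eq_zero_left (hode t ht i j))
  convert HasDerivWithinAt.fun_sum (u := Finset.univ) fun j _ => (hentry j).mul_const (c j) using 1
  · rfl
  · show -((A t *ᵥ (Y t *ᵥ c)) i) = _
    rw [mulVec_mulVec]
    simp [mulVec, dotProduct]

lemma solvesV_col (hode : ∀ t ∈ Icc a b, ∀ i j,
      derivWithin (fun s => Y s i j) (Icc a b) t + (A t * Y t) i j = 0) (k : Fin m) :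
    SolvesV a b A (fun t j => Y t j k) 0 :=
  fun t ht i => hode t ht i k

lemma map_mulVec_eq_of_map_col_eq_one {B : (ℝ → Fin m → ℂ) →ₗ[ℂ] (Fin m → ℂ)}
    (hbc : ∀ i k, B (fun t j => Y t j k) i = (1 : Matrix (Fin m) (Fin m) ℂ) i k)
    (c : Fin m → ℂ) : B (fun t => Y t *ᵥ c) = c := by
  have hcols : (fun t => Y t *ᵥ c) = ∑ k, c k • fun t j => Y t j k := by
    funext t j
    simp [mulVec, dotProduct, mul_comm]
  funext i
  simp [hcols, hbc, one_apply]

lemma det_ne_zero_of_matrixBVP {n : ℕ} {α : ℝ} {B : (ℝ → Fin m → ℂ) →ₗ[ℂ] (Fin m → ℂ)}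
    (hA : InHolderM a b n α A)
    (hB : ∃ K : ℝ, ∀ y : ℝ → Fin m → ℂ,
      InHolderV a b (n + 1) α y → ‖B y‖ ≤ K * holderNormV a b (n + 1) α y)
    (hY : InHolderM a b (n + 1) α Y)
    (hode : ∀ t ∈ Icc a b, ∀ i j,
      derivWithin (fun s => Y s i j) (Icc a b) t + (A t * Y t) i j = 0)
    (hbc : ∀ i k, B (fun t j => Y t j k) i = (1 : Matrix (Fin m) (Fin m) ℂ) i k)
    {t₀ : ℝ} (ht₀ : t₀ ∈ Icc a b) : (Y t₀).det ≠ 0 := by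
  intro hdet
  obtain ⟨c, hc, hYc⟩ := exists_mulVec_eq_zero_iff.2 hdet
  have hy : EqOn (fun t => Y t *ᵥ c) 0 (Icc a b) :=
    eqOn_zero_of_hasDerivWithinAt_neg_mulVec (fun i j => (hA i j).1.continuousOn)
      (fun t ht => hasDerivWithinAt_mulVec_of_matrixODE
        (fun i j => (hY i j).1.differentiableOn (by simp)) hode c ht) ht₀ hYc
  obtain ⟨K, hK⟩ := hB
  have hBy := hK _ (inHolderV_of_eqOn_zero hy)
  rw [holderNormV_eq_zero_of_eqOn_zero hy, mul_zero, map_mulVec_eq_of_map_col_eq_one hbc,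
    norm_le_zero_iff] at hBy
  exact hc hBy

end MatrixProblem

theorem statement16_general (a b : ℝ) (n m : ℕ)
    (α : ℝ) (ε₀ : ℝ)
    (A : ℝ → ℝ → Matrix (Fin m) (Fin m) ℂ)
    (B : ℝ → (ℝ → Fin m → ℂ) →ₗ[ℂ] (Fin m → ℂ))
    (hA : ∀ ε ∈ Set.Ico (0:ℝ) ε₀, InHolderM a b n α (A ε))
    (hB : ∀ ε ∈ Set.Ico (0:ℝ) ε₀, ∃ K : ℝ, ∀ y : ℝ → Fin m → ℂ,
      InHolderV a b (n + 1) α y → ‖B ε y‖ ≤ K * holderNormV a b (n + 1) α y)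
    -- ε₁ as in the Basic Definition :
    (ε₁ : ℝ) (hε₁ : ε₁ < ε₀)
    (hstarstar : ∀ (f : ℝ → ℝ → Fin m → ℂ) (q : ℝ → Fin m → ℂ) (y : ℝ → ℝ → Fin m → ℂ),
      (∀ ε ∈ Set.Ico (0:ℝ) ε₁, InHolderV a b n α (f ε) ∧ InHolderV a b (n + 1) α (y ε) ∧
        SolvesV a b (A ε) (y ε) (f ε) ∧ B ε (y ε) = q ε) →
      CondIII a b n α f → CondIV q →
      Filter.Tendsto (fun ε => holderNormV a b (n + 1) α (fun t => y ε t - y 0 t))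
        (nhdsWithin 0 (Set.Ioi 0)) (nhds 0))
    -- the family of solutions of the matrix boundary-value problem :
    (Y : ℝ → ℝ → Matrix (Fin m) (Fin m) ℂ)
    (hYmem : ∀ ε ∈ Set.Ico (0:ℝ) ε₁, InHolderM a b (n + 1) α (Y ε))
    (hYode : ∀ ε ∈ Set.Ico (0:ℝ) ε₁, ∀ t ∈ Set.Icc a b, ∀ i j,
      derivWithin (fun s => Y ε s i j) (Set.Icc a b) t + (A ε t * Y ε t) i j = 0)
    (hYbc : ∀ ε ∈ Set.Ico (0:ℝ) ε₁, ∀ i k,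
      B ε (fun t j => Y ε t j k) i = (1 : Matrix (Fin m) (Fin m) ℂ) i k) :
    (∀ ε ∈ Set.Ico (0:ℝ) ε₁, ∀ t ∈ Set.Icc a b, (Y ε t).det ≠ 0) ∧
    Filter.Tendsto (fun ε => holderNormM a b (n + 1) α (fun t => Y ε t - Y 0 t))
      (nhdsWithin 0 (Set.Ioi 0)) (nhds 0) := by
  have hsub : ∀ ε ∈ Ico (0:ℝ) ε₁, ε ∈ Ico (0:ℝ) ε₀ := fun ε hε => ⟨hε.1, hε.2.trans hε₁⟩
  refine ⟨fun ε hε t ht => det_ne_zero_of_matrixBVP (hA ε (hsub ε hε)) (hB ε (hsub ε hε))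
    (hYmem ε hε) (hYode ε hε) (hYbc ε hε) ht, ?_⟩
  have hcol (k : Fin m) : Tendsto (fun ε => holderNormV a b (n + 1) α
      (fun t j => (Y ε t - Y 0 t) j k)) (𝓝[>] 0) (𝓝 0) :=
    hstarstar (fun _ => 0) (fun _ i => (1 : Matrix (Fin m) (Fin m) ℂ) i k)
      (fun ε t j => Y ε t j k)
      (fun ε hε => ⟨inHolderV_of_eqOn_zero fun _ _ => rfl, fun i => hYmem ε hε i k,
        solvesV_col (hYode ε hε) k, funext fun i => hYbc ε hε i k⟩)
      (condIII_const 0) tendsto_const_nhds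
  simp_rw [holderNormM_eq_sum_holderNormV_col]
  simpa using tendsto_finsetSum Finset.univ fun k _ => hcol k

/-- Step 1 in the proof of Lemma 4.4: assume the solution of the family is
continuous in the parameter at `ε = 0`, with `ε₁` as in the Basic Definition, and for each
`ε ∈ [0,ε₁)` let `Y(·,ε) ∈ (C^{n+1,α})^{m×m}` solve the matrix problem
`Y' + A(·,ε)Y = 0`, `[B(ε)Y(·,ε)] = I_m`.  Then `det Y(t,ε) ≠ 0` on `[a,b]` and
`Y(·,ε) → Y(·,0)` in `(C^{n+1,α})^{m×m}` as `ε → 0+`. -/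
theorem statement16 (a b : ℝ) (hab : a < b) (n m : ℕ) (hm : 1 ≤ m)
    (α : ℝ) (hα0 : 0 ≤ α) (hα1 : α ≤ 1) (ε₀ : ℝ) (hε₀ : 0 < ε₀)
    (A : ℝ → ℝ → Matrix (Fin m) (Fin m) ℂ)
    (B : ℝ → (ℝ → Fin m → ℂ) →ₗ[ℂ] (Fin m → ℂ))
    (hA : ∀ ε ∈ Set.Ico (0:ℝ) ε₀, InHolderM a b n α (A ε))
    (hB : ∀ ε ∈ Set.Ico (0:ℝ) ε₀, ∃ K : ℝ, ∀ y : ℝ → Fin m → ℂ,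
      InHolderV a b (n + 1) α y → ‖B ε y‖ ≤ K * holderNormV a b (n + 1) α y)
    -- ε₁ as in the Basic Definition :
    (ε₁ : ℝ) (hε₁0 : 0 < ε₁) (hε₁ : ε₁ < ε₀)
    (hstar : ∀ ε ∈ Set.Ico (0:ℝ) ε₁, UniqSolv a b n α (A ε) (B ε))
    (hstarstar : ∀ (f : ℝ → ℝ → Fin m → ℂ) (q : ℝ → Fin m → ℂ) (y : ℝ → ℝ → Fin m → ℂ),
      (∀ ε ∈ Set.Ico (0:ℝ) ε₁, InHolderV a b n α (f ε) ∧ InHolderV a b (n + 1) α (y ε) ∧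
        SolvesV a b (A ε) (y ε) (f ε) ∧ B ε (y ε) = q ε) →
      CondIII a b n α f → CondIV q →
      Filter.Tendsto (fun ε => holderNormV a b (n + 1) α (fun t => y ε t - y 0 t))
        (nhdsWithin 0 (Set.Ioi 0)) (nhds 0))
    -- the family of solutions of the matrix boundary-value problem :
    (Y : ℝ → ℝ → Matrix (Fin m) (Fin m) ℂ)
    (hYmem : ∀ ε ∈ Set.Ico (0:ℝ) ε₁, InHolderM a b (n + 1) α (Y ε))
    (hYode : ∀ ε ∈ Set.Ico (0:ℝ) ε₁, ∀ t ∈ Set.Icc a b, ∀ i j,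
      derivWithin (fun s => Y ε s i j) (Set.Icc a b) t + (A ε t * Y ε t) i j = 0)
    (hYbc : ∀ ε ∈ Set.Ico (0:ℝ) ε₁, ∀ i k,
      B ε (fun t j => Y ε t j k) i = (1 : Matrix (Fin m) (Fin m) ℂ) i k) :
    (∀ ε ∈ Set.Ico (0:ℝ) ε₁, ∀ t ∈ Set.Icc a b, (Y ε t).det ≠ 0) ∧
    Filter.Tendsto (fun ε => holderNormM a b (n + 1) α (fun t => Y ε t - Y 0 t))
      (nhdsWithin 0 (Set.Ioi 0)) (nhds 0) :=
  statement16_general a b n m α ε₀ A B hA hB ε₁ hε₁ hstarstar Y hYmem hYode hYbc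
end
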